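/- arXiv:2312.10415 — 9 statements merged into one kernel-verified Lean document; each statement's English description precedes it below -/
import Mathlib

section
/- Let k ∈ ℂ with Re(k) < 0 and let φ : ℝ>0 × ℝ≥0 → V be a smooth function satisfying the cocycle relation φ(λ₁λ₂, t) = λ₂^{-k} φ(λ₁, tλ₂) + φ(λ₂, t). If φ(1/2, t) = 0 for all t ≥ 0, then φ = 0. -/
open Set

/-- If `Re k < 0`, `φ` is smooth on `ℝ>0 × ℝ≥0`, satisfies the cocycle
relation `(C_k)`, and `φ(1/2, t) = 0` for all `t ≥ 0`, then `φ = 0`. -/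
theorem stmt1 {V : Type*} [NormedAddCommGroup V] [NormedSpace ℂ V]
    [FiniteDimensional ℂ V] (k : ℂ) (hk : k.re < 0) (φ : ℝ → ℝ → V)
    (hsmooth : ContDiffOn ℝ (⊤ : ℕ∞) (fun p : ℝ × ℝ => φ p.1 p.2) (Ioi 0 ×ˢ Ici 0))
    (hcoc : ∀ l₁ > (0 : ℝ), ∀ l₂ > (0 : ℝ), ∀ t ≥ (0 : ℝ),
      φ (l₁ * l₂) t = ((l₂ : ℂ) ^ (-k)) • φ l₁ (t * l₂) + φ l₂ t)
    (hhalf : ∀ t ≥ (0 : ℝ), φ (1 / 2) t = 0) :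
    ∀ l > (0 : ℝ), ∀ t ≥ (0 : ℝ), φ l t = 0 := by
  intro l hl t ht
  set c : ℂ := (((1 : ℝ) / 2 : ℝ) : ℂ) ^ (-k) with hc
  -- recurrence
  have hrec : ∀ s ≥ (0 : ℝ), φ l s = c • φ l (s / 2) := by
    intro s hs
    have h1 := hcoc (1 / 2) (by norm_num) l hl s hs
    have h2 := hcoc l hl (1 / 2) (by norm_num) s hs
    rw [hhalf (s * l) (by positivity), smul_zero, zero_add] at h1
    rw [hhalf s hs, add_zero] at h2
    have : (1 / 2 : ℝ) * l = l * (1 / 2) := by ring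
    rw [this, h2] at h1
    rw [← h1]
    ring_nf
    rfl
  have key : ∀ n : ℕ, φ l t = c ^ n • φ l (t / 2 ^ n) := by
    intro n
    induction n with
    | zero => simp
    | succ n ih =>
      rw [ih, hrec (t / 2 ^ n) (by positivity)]
      rw [smul_smul, ← pow_succ]
      ring_nf
  -- |c| < 1
  have hcn : ‖c‖ < 1 := by
    have : ‖c‖ = ((1 : ℝ) / 2) ^ (-k).re := by
      rw [hc, Complex.norm_cpow_eq_rpow_re_of_pos (by norm_num)]
    rw [this]
    exact Real.rpow_lt_one (by norm_num) (by norm_num)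
      (by simp [Complex.neg_re]; linarith)
  have hcpow : Filter.Tendsto (fun n : ℕ => c ^ n) Filter.atTop (nhds 0) :=
    tendsto_pow_atTop_nhds_zero_of_norm_lt_one hcn
  -- continuity at (l, 0)
  have hmem : (l, (0 : ℝ)) ∈ Ioi (0 : ℝ) ×ˢ Ici (0 : ℝ) := by
    constructor <;> simp [hl]
  have hcont := (hsmooth.continuousOn (l, (0 : ℝ)) hmem)
  have hseq : Filter.Tendsto (fun n : ℕ => ((l, t / 2 ^ n) : ℝ × ℝ)) Filter.atTop
      (nhdsWithin (l, (0 : ℝ)) (Ioi (0 : ℝ) ×ˢ Ici (0 : ℝ))) := by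
    apply tendsto_nhdsWithin_of_tendsto_nhds_of_eventually_within
    · have h2 : Filter.Tendsto (fun n : ℕ => t / 2 ^ n) Filter.atTop (nhds 0) := by
        simpa using (tendsto_pow_atTop_nhds_zero_of_norm_lt_one
          (x := (1 / 2 : ℝ)) (by norm_num)).const_mul t |>.congr (fun n => by
            rw [div_pow]; ring)
      exact (Filter.Tendsto.prodMk_nhds tendsto_const_nhds h2)
    · filter_upwards with n
      exact ⟨hl, Set.mem_Ici.mpr (by positivity)⟩
  have hφtend : Filter.Tendsto (fun n : ℕ => φ l (t / 2 ^ n)) Filter.atTop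
      (nhds (φ l 0)) := hcont.tendsto.comp hseq
  have hfinal : Filter.Tendsto (fun n : ℕ => c ^ n • φ l (t / 2 ^ n)) Filter.atTop
      (nhds 0) := by
    have := hcpow.smul hφtend
    simpa using this
  have hconst : Filter.Tendsto (fun _ : ℕ => φ l t) Filter.atTop (nhds (φ l t)) :=
    tendsto_const_nhds
  have : Filter.Tendsto (fun n : ℕ => φ l t) Filter.atTop (nhds 0) := by
    apply hfinal.congr
    intro n
    exact (key n).symm
  exact tendsto_nhds_unique hconst this
end

section
/- Let k ∈ ℂ with Re(k) < 0 and φ : ℝ>0 × ℝ≥0 → V continuous satisfying the cocycle relation (C_k). Then the series ψ(t) := −∑_{j=0}^∞ φ(1/2, t/2^j) · 2^{jk} converges for every t ≥ 0, and the resulting function ψ satisfies φ(1/2, t) = 2^k ψ(t/2) − ψ(t) for all t ≥ 0. -/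
open Set

/-- For `Re k < 0` and `φ` continuous satisfying `(C_k)`, the series
`ψ(t) = −∑_{j} 2^{jk} • φ(1/2, t/2^j)` converges for every `t ≥ 0`, and
`φ(1/2, t) = 2^k • ψ(t/2) − ψ(t)`. -/
theorem stmt2 {V : Type*} [NormedAddCommGroup V] [NormedSpace ℂ V]
    [FiniteDimensional ℂ V] (k : ℂ) (hk : k.re < 0) (φ : ℝ → ℝ → V)
    (hcont : ContinuousOn (fun p : ℝ × ℝ => φ p.1 p.2) (Ioi 0 ×ˢ Ici 0))
    (hcoc : ∀ l₁ > (0 : ℝ), ∀ l₂ > (0 : ℝ), ∀ t ≥ (0 : ℝ),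
      φ (l₁ * l₂) t = ((l₂ : ℂ) ^ (-k)) • φ l₁ (t * l₂) + φ l₂ t)
    (ψ : ℝ → V)
    (hψ : ∀ t : ℝ, ψ t = -∑' j : ℕ, ((2 : ℂ) ^ ((j : ℂ) * k)) • φ (1 / 2) (t / 2 ^ j)) :
    ∀ t ≥ (0 : ℝ),
      Summable (fun j : ℕ => ((2 : ℂ) ^ ((j : ℂ) * k)) • φ (1 / 2) (t / 2 ^ j)) ∧
      φ (1 / 2) t = ((2 : ℂ) ^ k) • ψ (t / 2) - ψ t := by
  intro t ht
  -- continuity of s ↦ φ (1/2) s on [0, t]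
  have hg : ContinuousOn (fun s : ℝ => φ (1 / 2) s) (Icc 0 t) := by
    have : ContinuousOn (fun s : ℝ => φ (1 / 2) s) (Ici 0) := by
      have hmap : ∀ s ∈ Ici (0 : ℝ), ((1 / 2 : ℝ), s) ∈ Ioi (0 : ℝ) ×ˢ Ici (0 : ℝ) := by
        intro s hs; exact ⟨by norm_num, hs⟩
      exact hcont.comp (Continuous.continuousOn (by continuity)) hmap
    exact this.mono (Icc_subset_Ici_self)
  obtain ⟨C, hC⟩ := isCompact_Icc.exists_bound_of_continuousOn hg
  have hC0 : 0 ≤ C := le_trans (norm_nonneg _) (hC t ⟨ht, le_refl t⟩)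
  set r : ℝ := (2 : ℝ) ^ k.re with hr
  have hr1 : r < 1 := Real.rpow_lt_one_of_one_lt_of_neg one_lt_two hk
  have hr0 : 0 ≤ r := Real.rpow_nonneg (by norm_num) _
  -- generic summability
  have key : ∀ s : ℝ, 0 ≤ s → s ≤ t →
      Summable (fun j : ℕ => ((2 : ℂ) ^ ((j : ℂ) * k)) • φ (1 / 2) (s / 2 ^ j)) := by
    intro s hs0 hst
    apply Summable.of_norm_bounded ((summable_geometric_of_lt_one hr0 hr1).mul_left C)
    intro j
    have hmem : s / 2 ^ j ∈ Icc (0 : ℝ) t := by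
      constructor
      · positivity
      · calc s / 2 ^ j ≤ s := by
              apply div_le_self hs0
              exact one_le_pow₀ (by norm_num)
            _ ≤ t := hst
    have hnorm : ‖((2 : ℂ) ^ ((j : ℂ) * k))‖ = r ^ j := by
      have h2 : ((2 : ℂ)) = ((2 : ℝ) : ℂ) := by norm_num
      rw [h2, Complex.norm_cpow_eq_rpow_re_of_pos (by norm_num)]
      have : ((j : ℂ) * k).re = (j : ℝ) * k.re := by simp
      rw [this, mul_comm, Real.rpow_mul (by norm_num), hr, Real.rpow_natCast]
    rw [norm_smul, hnorm]
    calc r ^ j * ‖φ (1 / 2) (s / 2 ^ j)‖ ≤ r ^ j * C := by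
          exact mul_le_mul_of_nonneg_left (hC _ hmem) (pow_nonneg hr0 j)
      _ = C * r ^ j := mul_comm _ _
  have hsum := key t ht le_rfl
  refine ⟨hsum, ?_⟩
  have ht2 : (0 : ℝ) ≤ t / 2 := by positivity
  have hsum2 := key (t / 2) ht2 (by linarith)
  -- relate the two series
  have hshift : ∀ j : ℕ, ((2 : ℂ) ^ k) • (((2 : ℂ) ^ ((j : ℂ) * k)) • φ (1 / 2) ((t / 2) / 2 ^ j))
      = ((2 : ℂ) ^ ((((j : ℕ) + 1 : ℕ) : ℂ) * k)) • φ (1 / 2) (t / 2 ^ ((j : ℕ) + 1)) := by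
    intro j
    have harg : (t / 2) / 2 ^ j = t / 2 ^ (j + 1) := by
      rw [pow_succ]; ring
    rw [harg, smul_smul, ← Complex.cpow_add _ _ (by norm_num)]
    congr 2
    push_cast
    ring
  have hpsi2 : ((2 : ℂ) ^ k) • ψ (t / 2)
      = -∑' j : ℕ, ((2 : ℂ) ^ ((((j : ℕ) + 1 : ℕ) : ℂ) * k)) • φ (1 / 2) (t / 2 ^ ((j : ℕ) + 1)) := by
    rw [hψ, smul_neg, ← Summable.tsum_const_smul _ hsum2]
    congr 1
    exact tsum_congr hshift
  have hzero : ∑' j : ℕ, ((2 : ℂ) ^ ((j : ℂ) * k)) • φ (1 / 2) (t / 2 ^ j)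
      = φ (1 / 2) t + ∑' j : ℕ, ((2 : ℂ) ^ ((((j : ℕ) + 1 : ℕ) : ℂ) * k)) • φ (1 / 2) (t / 2 ^ ((j : ℕ) + 1)) := by
    rw [Summable.tsum_eq_zero_add hsum]
    congr 1
    · norm_num [Complex.cpow_def]
  rw [hpsi2, hψ t, hzero]
  abel
end

section
/- Let k ∈ ℂ with Re(k) < 0 and φ : ℝ>0 × ℝ≥0 → V a smooth function satisfying the cocycle relation (C_k). Then there exists a smooth function ψ : ℝ≥0 → V such that φ(λ, t) = λ^{-k} ψ(λt) − ψ(t) for all λ > 0 and t ≥ 0. -/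
open Set

open Filter Topology ENNReal

set_option maxHeartbeats 1000000

/-- Contraction lemma: if `E` satisfies `E s = c • E (s/2)` on a set `S` stable under halving,
`‖c‖ < 1`, and `E` has a limit at `0` within `S`, then `E` vanishes on `S`. -/
private lemma aux_contract {V : Type*} [NormedAddCommGroup V] [NormedSpace ℂ V]
    {c : ℂ} (hc : ‖c‖ < 1) {E : ℝ → V} {S : Set ℝ}
    (hS : ∀ s ∈ S, 2⁻¹ * s ∈ S) {L : V}
    (hcont : Filter.Tendsto E (nhdsWithin 0 S) (nhds L))
    (hstep : ∀ s ∈ S, E s = c • E (2⁻¹ * s)) {t : ℝ} (ht : t ∈ S) : E t = 0 := by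
  have key : ∀ N : ℕ, (2⁻¹ : ℝ) ^ N * t ∈ S ∧ E t = c ^ N • E ((2⁻¹ : ℝ) ^ N * t) := by
    intro N; induction N with
    | zero => simpa using ht
    | succ n ih =>
      constructor
      · have h := hS _ ih.1
        have : 2⁻¹ * ((2⁻¹ : ℝ) ^ n * t) = (2⁻¹ : ℝ) ^ (n + 1) * t := by ring
        rwa [this] at h
      · rw [ih.2, hstep _ ih.1, smul_smul, pow_succ]
        congr 2
        ring
  have h1 : Tendsto (fun N : ℕ => (2⁻¹ : ℝ) ^ N * t) atTop (nhdsWithin 0 S) := by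
    rw [tendsto_nhdsWithin_iff]
    constructor
    · have h : Tendsto (fun N : ℕ => (2⁻¹ : ℝ) ^ N) atTop (nhds 0) :=
        tendsto_pow_atTop_nhds_zero_of_lt_one (by norm_num) (by norm_num)
      simpa using h.mul_const t
    · exact Eventually.of_forall fun N => (key N).1
  have h2 : Tendsto (fun N : ℕ => c ^ N • E ((2⁻¹ : ℝ) ^ N * t)) atTop (nhds ((0 : ℂ) • L)) :=
    (tendsto_pow_atTop_nhds_zero_of_norm_lt_one hc).smul (hcont.comp h1)
  rw [zero_smul] at h2
  have h3 : Tendsto (fun _ : ℕ => E t) atTop (nhds (E t)) := tendsto_const_nhds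
  exact tendsto_nhds_unique h3 (h2.congr fun N => ((key N).2).symm)

/-- For `Re k < 0` and `φ` smooth satisfying `(C_k)`, there exists a smooth
`ψ : ℝ≥0 → V` with `φ(λ, t) = λ^{-k} • ψ(λ t) − ψ(t)` for all `λ > 0`, `t ≥ 0`. -/
theorem stmt3 {V : Type*} [NormedAddCommGroup V] [NormedSpace ℂ V]
    [FiniteDimensional ℂ V] (k : ℂ) (hk : k.re < 0) (φ : ℝ → ℝ → V)
    (hsmooth : ContDiffOn ℝ (⊤ : ℕ∞) (fun p : ℝ × ℝ => φ p.1 p.2) (Ioi 0 ×ˢ Ici 0))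
    (hcoc : ∀ l₁ > (0 : ℝ), ∀ l₂ > (0 : ℝ), ∀ t ≥ (0 : ℝ),
      φ (l₁ * l₂) t = ((l₂ : ℂ) ^ (-k)) • φ l₁ (t * l₂) + φ l₂ t) :
    ∃ ψ : ℝ → V, ContDiffOn ℝ (⊤ : ℕ∞) ψ (Ici 0) ∧
      ∀ l > (0 : ℝ), ∀ t ≥ (0 : ℝ),
        φ l t = ((l : ℂ) ^ (-k)) • ψ (l * t) - ψ t := by
  have h2 : (0 : ℝ) < 2⁻¹ := by norm_num
  set c : ℂ := (((2⁻¹ : ℝ) : ℂ)) ^ (-k) with hc_def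
  have hcnorm : ‖c‖ = (2⁻¹ : ℝ) ^ (-k).re := by
    rw [hc_def, Complex.norm_cpow_eq_rpow_re_of_pos h2]
  have hc1 : ‖c‖ < 1 := by
    rw [hcnorm]
    apply Real.rpow_lt_one (by norm_num) (by norm_num)
    simpa using hk
  have hc0 : (0 : ℝ) ≤ ‖c‖ := norm_nonneg _
  -- the function g = φ(1/2, ·)
  set g : ℝ → V := fun t => φ 2⁻¹ t with hg_def
  have hφcont : ContinuousOn (fun p : ℝ × ℝ => φ p.1 p.2) (Ioi 0 ×ˢ Ici 0) :=
    hsmooth.continuousOn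
  have hline : ∀ l : ℝ, 0 < l → ContinuousOn (fun t => φ l t) (Ici 0) := by
    intro l hl
    have : ContinuousOn (fun t : ℝ => ((l, t) : ℝ × ℝ)) (Ici 0) :=
      (continuous_const.prodMk continuous_id).continuousOn
    exact hφcont.comp this (fun t ht => ⟨hl, ht⟩)
  have hgcont : ContinuousOn g (Ici 0) := hline 2⁻¹ h2
  -- bounds for g on compact intervals
  have hbound : ∀ M : ℝ, ∃ K, 0 ≤ K ∧ ∀ u ∈ Icc (0 : ℝ) M, ‖g u‖ ≤ K := by
    intro M
    obtain ⟨C, hC⟩ := isCompact_Icc.exists_bound_of_continuousOn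
      (hgcont.mono (fun u hu => hu.1))
    exact ⟨max C 0, le_max_right _ _, fun u hu => (hC u hu).trans (le_max_left _ _)⟩
  have hmem_Icc : ∀ t : ℝ, 0 ≤ t → ∀ n : ℕ, (2⁻¹ : ℝ) ^ n * t ∈ Icc (0 : ℝ) t := by
    intro t ht n
    constructor
    · positivity
    · exact mul_le_of_le_one_left ht (pow_le_one₀ (by norm_num) (by norm_num))
  have hsum : ∀ t ∈ Ici (0 : ℝ), Summable (fun n : ℕ => c ^ n • g ((2⁻¹ : ℝ) ^ n * t)) := by
    intro t ht
    obtain ⟨K, hK0, hK⟩ := hbound t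
    apply Summable.of_norm_bounded (g := fun n => ‖c‖ ^ n * K)
      ((summable_geometric_of_lt_one hc0 hc1).mul_right K)
    intro n
    rw [norm_smul, norm_pow]
    exact mul_le_mul_of_nonneg_left (hK _ (hmem_Icc t ht n)) (by positivity)
  set ψ : ℝ → V := fun t => -∑' n : ℕ, c ^ n • g ((2⁻¹ : ℝ) ^ n * t) with hψ_def
  -- continuity of ψ on Ici 0
  have hFcont : ContinuousOn (fun t => ∑' n : ℕ, c ^ n • g ((2⁻¹ : ℝ) ^ n * t)) (Ici 0) := by
    intro x hx
    obtain ⟨K, hK0, hK⟩ := hbound (x + 1)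
    have hIcc : ContinuousOn (fun t => ∑' n : ℕ, c ^ n • g ((2⁻¹ : ℝ) ^ n * t))
        (Icc 0 (x + 1)) := by
      apply continuousOn_tsum (u := fun n => ‖c‖ ^ n * K)
      · intro n
        apply ContinuousOn.const_smul
        apply hgcont.comp (continuous_const.mul continuous_id).continuousOn
        intro t ht
        exact mul_nonneg (by positivity) ht.1
      · exact (summable_geometric_of_lt_one hc0 hc1).mul_right K
      · intro n t ht
        rw [norm_smul, norm_pow]
        apply mul_le_mul_of_nonneg_left _ (by positivity)
        apply hK
        have h1 := hmem_Icc t ht.1 n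
        exact ⟨h1.1, h1.2.trans ht.2⟩
    have hmem : Icc (0:ℝ) (x+1) ∈ nhdsWithin x (Ici 0) := by
      rw [show Icc (0:ℝ) (x+1) = Ici 0 ∩ Iic (x+1) from rfl]
      exact Filter.inter_mem self_mem_nhdsWithin
        (mem_nhdsWithin_of_mem_nhds (Iic_mem_nhds (by linarith)))
    exact (hIcc x ⟨hx, by linarith⟩).mono_of_mem_nhdsWithin hmem
  have hψcont : ContinuousOn ψ (Ici 0) := hFcont.neg
  -- functional equation for ψ
  have hψeq : ∀ t ∈ Ici (0 : ℝ), ψ t = c • ψ (2⁻¹ * t) - g t := by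
    intro t ht
    have ht' : (2⁻¹ * t) ∈ Ici (0 : ℝ) := by
      have : (0:ℝ) ≤ t := ht
      simp only [mem_Ici]
      positivity
    have hs := hsum t ht
    have hs' := hsum _ ht'
    have hshift : (∑' n : ℕ, c ^ n • g ((2⁻¹ : ℝ) ^ n * t))
        = g t + c • ∑' n : ℕ, c ^ n • g ((2⁻¹ : ℝ) ^ n * (2⁻¹ * t)) := by
      rw [Summable.tsum_eq_zero_add hs]
      congr 1
      · simp
      · rw [← ((hs'.hasSum).const_smul c).tsum_eq]
        congr 1
        ext n
        rw [smul_smul, ← pow_succ']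
        congr 2
        ring
    rw [hψ_def]
    simp only []
    rw [hshift]
    rw [smul_neg]
    abel
  have hψeq' : ∀ t ∈ Ici (0 : ℝ), ψ t = c • ψ (2⁻¹ * t) - φ 2⁻¹ t := hψeq
  -- the main identity
  have hmain : ∀ l > (0 : ℝ), ∀ t ≥ (0 : ℝ),
      φ l t = ((l : ℂ) ^ (-k)) • ψ (l * t) - ψ t := by
    intro l hl t ht
    set L : ℂ := ((l : ℂ)) ^ (-k) with hL_def
    set E : ℝ → V := fun s => φ l s + ψ s - L • ψ (l * s) with hE_def
    have hstep : ∀ s ∈ Ici (0:ℝ), E s = c • E (2⁻¹ * s) := by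
      intro s hs
      have hs0 : (0:ℝ) ≤ s := hs
      have hls : (0:ℝ) ≤ l * s := by positivity
      have h1 := hcoc l hl 2⁻¹ h2 s hs0
      have h2' := hcoc 2⁻¹ h2 l hl s hs0
      have hcomm : φ (l * 2⁻¹) s = φ (2⁻¹ * l) s := by rw [mul_comm]
      rw [h1, h2'] at hcomm
      -- hcomm : c • φ l (s * 2⁻¹) + φ 2⁻¹ s = L • φ 2⁻¹ (s * l) + φ l s
      have hψs := hψeq s hs
      have hψls := hψeq (l * s) hls
      have e1 : s * 2⁻¹ = 2⁻¹ * s := by ring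
      have e2 : s * l = l * s := by ring
      have e3 : 2⁻¹ * (l * s) = l * (2⁻¹ * s) := by ring
      rw [e1, e2] at hcomm
      rw [← hc_def, ← hL_def] at hcomm
      rw [e3] at hψls
      -- now combine
      have hφls : φ l s = c • φ l (2⁻¹ * s) + φ 2⁻¹ s - L • φ 2⁻¹ (l * s) := by
        rw [hcomm]; abel
      rw [hE_def]
      simp only []
      rw [hφls, hψs, hψls]
      module
    have hcont : Tendsto E (nhdsWithin 0 (Ici 0)) (nhds (E 0)) := by
      have c1 : ContinuousWithinAt (fun s => φ l s) (Ici 0) 0 :=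
        hline l hl 0 self_mem_Ici
      have c2 : ContinuousWithinAt ψ (Ici 0) 0 := hψcont 0 self_mem_Ici
      have c3 : ContinuousWithinAt (fun s => ψ (l * s)) (Ici 0) 0 := by
        have hmul : ContinuousWithinAt (fun s : ℝ => l * s) (Ici 0) 0 :=
          (continuous_const.mul continuous_id).continuousWithinAt
        have : ContinuousWithinAt ψ (Ici 0) (l * 0) := by
          rw [mul_zero]; exact c2
        apply this.comp hmul
        intro s hs
        have : (0:ℝ) ≤ s := hs
        simp only [mem_Ici]
        positivity
      exact ((c1.add c2).sub (c3.const_smul L)).tendsto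
    have hE0 : E t = 0 := by
      apply aux_contract hc1 _ hcont hstep ht
      intro s hs
      have : (0:ℝ) ≤ s := hs
      simp only [mem_Ici]
      positivity
    have : φ l t + ψ t = L • ψ (l * t) := by
      have h := hE0
      rw [hE_def] at h
      simp only [] at h
      rwa [sub_eq_zero] at h
    rw [← this]; abel
  -- smoothness of ψ on Ici 0 (termwise differentiation of the series)
  have hU : UniqueDiffOn ℝ (Ici (0:ℝ)) := uniqueDiffOn_Ici 0
  have hgsm : ContDiffOn ℝ ((⊤ : ℕ∞) : WithTop ℕ∞) g (Ici 0) := by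
    have hin : ContDiff ℝ ((⊤ : ℕ∞) : WithTop ℕ∞) (fun t : ℝ => (((2⁻¹ : ℝ), t) : ℝ × ℝ)) :=
      contDiff_const.prodMk contDiff_id
    exact hsmooth.comp hin.contDiffOn (fun t ht => Set.mem_prod.2 ⟨h2, ht⟩)
  obtain ⟨G, hG⟩ : ∃ G : ℕ → ℝ → V, G = fun m => iteratedDerivWithin m g (Ici 0) := ⟨_, rfl⟩
  have hGcont : ∀ m, ContinuousOn (G m) (Ici 0) := by
    intro m
    rw [hG]
    exact hgsm.continuousOn_iteratedDerivWithin (by exact_mod_cast le_top) hU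
  have hGder : ∀ m, ∀ x ∈ Ici (0:ℝ), HasDerivWithinAt (G m) (G (m+1) x) (Ici 0) x := by
    intro m x hx
    have hd := hgsm.differentiableOn_iteratedDerivWithin (m := m)
      (by exact_mod_cast WithTop.coe_lt_top _) hU x hx
    have e : G (m+1) x = derivWithin (G m) (Ici 0) x := by
      simp only [hG]
      rw [iteratedDerivWithin_succ]
    rw [e, hG]
    exact hd.hasDerivWithinAt
  have hGbound : ∀ m, ∀ M : ℝ, ∃ K, 0 ≤ K ∧ ∀ u ∈ Icc (0 : ℝ) M, ‖G m u‖ ≤ K := by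
    intro m M
    obtain ⟨C, hC⟩ := isCompact_Icc.exists_bound_of_continuousOn
      ((hGcont m).mono (fun u hu => hu.1))
    exact ⟨max C 0, le_max_right _ _, fun u hu => (hC u hu).trans (le_max_left _ _)⟩
  have hterm : ∀ m n : ℕ, ∀ t M K : ℝ, 0 ≤ t → t ≤ M → (∀ u ∈ Icc (0:ℝ) M, ‖G m u‖ ≤ K) →
      ‖c ^ n • (((2⁻¹ : ℝ) ^ (n * m)) • G m ((2⁻¹ : ℝ) ^ n * t))‖ ≤ ‖c‖ ^ n * K := by
    intro m n t M K ht htM hK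
    rw [norm_smul, norm_smul, norm_pow, Real.norm_eq_abs, abs_of_nonneg (by positivity)]
    apply mul_le_mul_of_nonneg_left _ (by positivity)
    have hr : (2⁻¹ : ℝ) ^ (n * m) ≤ 1 := pow_le_one₀ (by norm_num) (by norm_num)
    have h1 := hmem_Icc t ht n
    have hv := hK _ ⟨h1.1, h1.2.trans htM⟩
    calc (2⁻¹ : ℝ) ^ (n * m) * ‖G m ((2⁻¹ : ℝ) ^ n * t)‖ ≤ 1 * ‖G m ((2⁻¹ : ℝ) ^ n * t)‖ :=
          mul_le_mul_of_nonneg_right hr (norm_nonneg _)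
      _ ≤ K := by rw [one_mul]; exact hv
  have hsumF : ∀ m, ∀ t : ℝ, 0 ≤ t →
      Summable (fun n : ℕ => c ^ n • (((2⁻¹ : ℝ) ^ (n * m)) • G m ((2⁻¹ : ℝ) ^ n * t))) := by
    intro m t ht
    obtain ⟨K, hK0, hK⟩ := hGbound m t
    exact Summable.of_norm_bounded (g := fun n => ‖c‖ ^ n * K)
      ((summable_geometric_of_lt_one hc0 hc1).mul_right K) (fun n => hterm m n t t K ht le_rfl hK)
  obtain ⟨F, hF⟩ : ∃ F : ℕ → ℝ → V, F = fun m t =>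
      ∑' n : ℕ, c ^ n • (((2⁻¹ : ℝ) ^ (n * m)) • G m ((2⁻¹ : ℝ) ^ n * t)) := ⟨_, rfl⟩
  have hFcont : ∀ m, ContinuousOn (F m) (Ici 0) := by
    intro m x hx
    obtain ⟨K, hK0, hK⟩ := hGbound m (x + 1)
    have hIcc : ContinuousOn (F m) (Icc 0 (x + 1)) := by
      simp only [hF]
      apply continuousOn_tsum (u := fun n => ‖c‖ ^ n * K)
      · intro n
        apply ContinuousOn.const_smul
        apply ContinuousOn.const_smul
        apply (hGcont m).comp (continuous_const.mul continuous_id).continuousOn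
        intro t ht
        exact mul_nonneg (by positivity) ht.1
      · exact (summable_geometric_of_lt_one hc0 hc1).mul_right K
      · intro n t ht
        exact hterm m n t (x+1) K ht.1 ht.2 hK
    have hmem : Icc (0:ℝ) (x+1) ∈ nhdsWithin x (Ici 0) := by
      rw [show Icc (0:ℝ) (x+1) = Ici 0 ∩ Iic (x+1) from rfl]
      exact Filter.inter_mem self_mem_nhdsWithin
        (mem_nhdsWithin_of_mem_nhds (Iic_mem_nhds (by linarith)))
    exact (hIcc x ⟨hx, by linarith⟩).mono_of_mem_nhdsWithin hmem
  have hFderiv : ∀ m, ∀ x : ℝ, 0 < x → HasDerivAt (F m) (F (m+1) x) x := by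
    intro m x hx
    obtain ⟨K, hK0, hK⟩ := hGbound (m+1) (x + 1)
    have hterm_der : ∀ n : ℕ, ∀ y ∈ Ioo (0:ℝ) (x+1),
        HasDerivAt (fun z => c ^ n • (((2⁻¹ : ℝ) ^ (n * m)) • G m ((2⁻¹ : ℝ) ^ n * z)))
          (c ^ n • (((2⁻¹ : ℝ) ^ (n * (m+1))) • G (m+1) ((2⁻¹ : ℝ) ^ n * y))) y := by
      intro n y hy
      have hpos : 0 < (2⁻¹ : ℝ) ^ n * y := by have := hy.1; positivity
      have h1 : HasDerivAt (G m) (G (m+1) ((2⁻¹ : ℝ) ^ n * y)) ((2⁻¹ : ℝ) ^ n * y) :=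
        (hGder m _ hpos.le).hasDerivAt (Ici_mem_nhds hpos)
      have h2 : HasDerivAt (fun z : ℝ => (2⁻¹ : ℝ) ^ n * z) ((2⁻¹ : ℝ) ^ n) y := by
        simpa using (hasDerivAt_id y).const_mul ((2⁻¹ : ℝ) ^ n)
      have h3 := ((h1.scomp y h2).const_smul ((2⁻¹ : ℝ) ^ (n * m))).const_smul (c ^ n)
      refine h3.congr_deriv ?_
      rw [smul_smul, ← pow_add, show n * m + n = n * (m + 1) by ring]
    have hs := hasDerivAt_tsum_of_isPreconnected (u := fun n => ‖c‖ ^ n * K)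
      ((summable_geometric_of_lt_one hc0 hc1).mul_right K) isOpen_Ioo isPreconnected_Ioo
      hterm_der (fun n y hy => hterm (m+1) n y (x+1) K hy.1.le hy.2.le hK)
      (y₀ := x) ⟨hx, by linarith⟩ (hsumF m x hx.le) ⟨hx, by linarith⟩
    simp only [hF]
    exact hs
  have hFder : ∀ m, ∀ x ∈ Ici (0:ℝ), HasDerivWithinAt (F m) (F (m+1) x) (Ici 0) x := by
    intro m x hx
    rcases (show (0:ℝ) ≤ x from hx).lt_or_eq with hx0 | hx0
    · exact (hFderiv m x hx0).hasDerivWithinAt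
    · subst hx0
      apply hasDerivWithinAt_Ici_of_tendsto_deriv (s := Ioi 0)
      · intro y hy
        exact (hFderiv m y hy).differentiableAt.differentiableWithinAt
      · exact (hFcont m 0 self_mem_Ici).mono Ioi_subset_Ici_self
      · exact self_mem_nhdsWithin
      · have hc' : Tendsto (F (m+1)) (𝓝[>] 0) (𝓝 (F (m+1) 0)) :=
          ((hFcont (m+1) 0 self_mem_Ici).mono Ioi_subset_Ici_self).tendsto
        apply hc'.congr'
        filter_upwards [self_mem_nhdsWithin] with y hy
        exact (hFderiv m y hy).deriv.symm
  have hFsmooth : ∀ N : ℕ, ∀ m, ContDiffOn ℝ N (F m) (Ici 0) := by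
    intro N
    induction N with
    | zero => intro m; exact contDiffOn_zero.2 (hFcont m)
    | succ N ih =>
      intro m
      rw [show ((N + 1 : ℕ) : WithTop ℕ∞) = (N : WithTop ℕ∞) + 1 by push_cast; rfl,
        contDiffOn_succ_iff_derivWithin hU]
      refine ⟨fun x hx => (hFder m x hx).differentiableWithinAt, by simp, ?_⟩
      apply (ih (m+1)).congr
      intro x hx
      exact (hFder m x hx).derivWithin (hU x hx)
  have hψsmooth : ContDiffOn ℝ (⊤ : ℕ∞) ψ (Ici 0) := by
    have h0 : ContDiffOn ℝ ((⊤ : ℕ∞) : WithTop ℕ∞) (F 0) (Ici 0) := contDiffOn_infty.2 fun N => hFsmooth N 0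
    apply h0.neg.congr
    intro t ht
    simp only [hψ_def, hF, hG, Pi.neg_apply, mul_zero, pow_zero, one_smul,
      iteratedDerivWithin_zero]
  exact ⟨ψ, hψsmooth, hmain⟩
end

section
/- Let k ∈ ℂ and φ : ℝ>0 × ℝ≥0 → V smooth satisfying the cocycle relation (C_k) with φ(λ, 0) = 0 for all λ > 0. Then the function (λ, t) ↦ φ(λ, t)/t (extended by ∂φ/∂t(λ,0) at t = 0) is smooth and satisfies the cocycle relation (C_{k−1}). -/
open Set Filter Topology NNReal ENNReal

section HadamardAux

variable {V : Type*} [NormedAddCommGroup V] [NormedSpace ℝ V] [CompleteSpace V]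

noncomputable def hadInt (m : ℕ) (Ψ : ℝ × ℝ → V) (y : ℝ × ℝ) : V :=
  ∫ s in (0:ℝ)..1, (s ^ m) • Ψ (y.1, s * y.2)

lemma had_cont {Ψ : ℝ × ℝ → V} (hΨ : ContinuousOn Ψ (Ioi (0:ℝ) ×ˢ Ici (0:ℝ)))
    {l t : ℝ} (hl : 0 < l) (ht : 0 ≤ t) (m : ℕ) :
    ContinuousOn (fun s : ℝ => (s ^ m) • Ψ (l, s * t)) (uIcc 0 1) := by
  rw [uIcc_of_le zero_le_one]
  refine (continuous_pow m).continuousOn.smul (hΨ.comp ?_ ?_)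
  · exact (continuous_const.prodMk (continuous_id.mul continuous_const)).continuousOn
  · intro s hs
    exact ⟨hl, mul_nonneg hs.1 ht⟩

lemma clm_prod_decomp (A : ℝ × ℝ →L[ℝ] V) (u v : ℝ) :
    A (u, v) = u • A (1, 0) + v • A (0, 1) := by
  rw [← A.map_smul, ← A.map_smul, ← A.map_add]
  congr 1
  ext <;> simp

lemma had_hasFDeriv {Ψ : ℝ × ℝ → V} (hΨ : ContDiffOn ℝ 1 Ψ (Ioi (0:ℝ) ×ˢ Ici (0:ℝ))) (m : ℕ)
    {y : ℝ × ℝ} (hy : y ∈ (Ioi (0:ℝ) ×ˢ Ici (0:ℝ))) :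
    HasFDerivWithinAt (hadInt m Ψ)
      ((ContinuousLinearMap.fst ℝ ℝ ℝ).smulRight
          (hadInt m (fun z => fderivWithin ℝ Ψ (Ioi (0:ℝ) ×ˢ Ici (0:ℝ)) z (1, 0)) y) +
        (ContinuousLinearMap.snd ℝ ℝ ℝ).smulRight
          (hadInt (m + 1) (fun z => fderivWithin ℝ Ψ (Ioi (0:ℝ) ×ˢ Ici (0:ℝ)) z (0, 1)) y))
      (Ioi (0:ℝ) ×ˢ Ici (0:ℝ)) y := by
  set S : Set (ℝ × ℝ) := Ioi (0:ℝ) ×ˢ Ici (0:ℝ) with hS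
  have hud : UniqueDiffOn ℝ S := (isOpen_Ioi.uniqueDiffOn).prod (uniqueDiffOn_Ici 0)
  set DΨ := fderivWithin ℝ Ψ S with hDΨ
  have hDc : ContinuousOn DΨ S := hΨ.continuousOn_fderivWithin hud le_rfl
  have hΨc : ContinuousOn Ψ S := hΨ.continuousOn
  have hΨd : ∀ z ∈ S, HasFDerivWithinAt Ψ (DΨ z) S z := fun z hz =>
    ((hΨ.differentiableOn one_ne_zero) z hz).hasFDerivWithinAt
  have hc1 : ContinuousOn (fun z => DΨ z (1, 0)) S := hDc.clm_apply continuousOn_const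
  have hc2 : ContinuousOn (fun z => DΨ z (0, 1)) S := hDc.clm_apply continuousOn_const
  obtain ⟨l, t⟩ := y
  have hl : 0 < l := hy.1
  have ht : 0 ≤ t := hy.2
  set K : Set (ℝ × ℝ) := Icc (l/2) (2*l) ×ˢ Icc 0 (t+1) with hK
  have hKS : K ⊆ S := fun z hz => ⟨lt_of_lt_of_le (by linarith) hz.1.1, hz.2.1⟩
  have hKc : IsCompact K := isCompact_Icc.prod isCompact_Icc
  have hKconv : Convex ℝ K := (convex_Icc _ _).prod (convex_Icc _ _)
  have hUC : UniformContinuousOn DΨ K := hKc.uniformContinuousOn_of_continuous (hDc.mono hKS)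
  rw [hasFDerivWithinAt_iff_isLittleO, Asymptotics.isLittleO_iff]
  intro ε hε
  obtain ⟨δ, hδ, hδε⟩ := Metric.uniformContinuousOn_iff_le.mp hUC ε hε
  have hball : Metric.ball ((l, t) : ℝ × ℝ) (min δ (min (l/2) 1)) ∈ 𝓝 ((l, t) : ℝ × ℝ) :=
    Metric.ball_mem_nhds _ (lt_min hδ (lt_min (by linarith) one_pos))
  filter_upwards [mem_nhdsWithin_of_mem_nhds hball, self_mem_nhdsWithin] with y' hy'b hy'S
  obtain ⟨l', t'⟩ := y'
  rw [Metric.mem_ball] at hy'b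
  have hnorm : ‖((l', t') : ℝ × ℝ) - (l, t)‖ < δ := by
    rw [← dist_eq_norm]; exact lt_of_lt_of_le hy'b (min_le_left _ _)
  have hy'b2 := hy'b
  rw [Prod.dist_eq, Real.dist_eq, Real.dist_eq] at hy'b2
  have hl1 : |l' - l| < min (l/2) 1 :=
    lt_of_lt_of_le (lt_of_le_of_lt (le_max_left _ _) hy'b2) (min_le_right _ _)
  have ht1 : |t' - t| < min (l/2) 1 :=
    lt_of_lt_of_le (lt_of_le_of_lt (le_max_right _ _) hy'b2) (min_le_right _ _)
  have hl1' := lt_of_lt_of_le hl1 (min_le_left _ _)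
  have ht1' := lt_of_lt_of_le ht1 (min_le_right _ _)
  rw [abs_lt] at hl1' ht1'
  have hl' : 0 < l' := by linarith
  have ht' : 0 ≤ t' := hy'S.2
  have hpt : ∀ s ∈ Icc (0:ℝ) 1,
      ‖Ψ (l', s * t') - Ψ (l, s * t) - DΨ (l, s * t) ((l', s * t') - (l, s * t))‖ ≤
        ε * ‖((l', t') : ℝ × ℝ) - (l, t)‖ := by
    intro s hs
    have hzK : ((l, s * t) : ℝ × ℝ) ∈ K :=
      ⟨⟨by linarith, by linarith⟩, ⟨mul_nonneg hs.1 ht, by nlinarith [hs.1, hs.2]⟩⟩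
    have hz'K : ((l', s * t') : ℝ × ℝ) ∈ K :=
      ⟨⟨by linarith, by linarith⟩, ⟨mul_nonneg hs.1 ht', by nlinarith [hs.1, hs.2]⟩⟩
    have hdist : ‖((l', s * t') : ℝ × ℝ) - (l, s * t)‖ ≤ ‖((l', t') : ℝ × ℝ) - (l, t)‖ := by
      rw [Prod.mk_sub_mk, Prod.mk_sub_mk, Prod.norm_def, Prod.norm_def]
      refine max_le_max le_rfl ?_
      rw [Real.norm_eq_abs, Real.norm_eq_abs, ← mul_sub, abs_mul, abs_of_nonneg hs.1]
      exact mul_le_of_le_one_left (abs_nonneg _) hs.2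
    have hmv := Convex.norm_image_sub_le_of_norm_hasFDerivWithin_le
      (f := fun w => Ψ w - DΨ (l, s * t) w) (f' := fun w => DΨ w - DΨ (l, s * t))
      (s := K ∩ Metric.closedBall ((l, s * t) : ℝ × ℝ) δ) (C := ε)
      (fun w hw => ((hΨd w (hKS hw.1)).mono (inter_subset_left.trans hKS)).sub
        (DΨ (l, s * t)).hasFDerivWithinAt)
      (fun w hw => by
        rw [← dist_eq_norm]
        exact hδε w hw.1 _ hzK (Metric.mem_closedBall.mp hw.2))
      (hKconv.inter (convex_closedBall _ _))
      ⟨hzK, Metric.mem_closedBall_self hδ.le⟩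
      ⟨hz'K, by rw [Metric.mem_closedBall, dist_eq_norm]; linarith⟩
    have hrw : Ψ (l', s * t') - Ψ (l, s * t) - DΨ (l, s * t) ((l', s * t') - (l, s * t)) =
        (Ψ (l', s * t') - DΨ (l, s * t) (l', s * t')) - (Ψ (l, s * t) - DΨ (l, s * t) (l, s * t)) := by
      rw [map_sub]; abel
    rw [hrw]
    exact hmv.trans (mul_le_mul_of_nonneg_left hdist hε.le)
  have ci1 := had_cont hΨc hl' ht' m
  have ci2 := had_cont hΨc hl ht m
  have ci3 := (had_cont hc1 hl ht m).const_smul (l' - l)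
  have ci4 := (had_cont hc2 hl ht (m + 1)).const_smul (t' - t)
  have i12 : IntervalIntegrable (fun s : ℝ => (s ^ m) • Ψ (l', s * t') - (s ^ m) • Ψ (l, s * t))
      MeasureTheory.volume 0 1 := (ci1.sub ci2).intervalIntegrable
  have i1 : IntervalIntegrable (fun s : ℝ => (s ^ m) • Ψ (l', s * t'))
      MeasureTheory.volume 0 1 := ci1.intervalIntegrable
  have i2 : IntervalIntegrable (fun s : ℝ => (s ^ m) • Ψ (l, s * t))
      MeasureTheory.volume 0 1 := ci2.intervalIntegrable
  have i3 : IntervalIntegrable (fun s : ℝ => (l' - l) • ((s ^ m) • DΨ (l, s * t) (1, 0)))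
      MeasureTheory.volume 0 1 := ci3.intervalIntegrable
  have i4 : IntervalIntegrable (fun s : ℝ => (t' - t) • ((s ^ (m + 1)) • DΨ (l, s * t) (0, 1)))
      MeasureTheory.volume 0 1 := ci4.intervalIntegrable
  have i34 : IntervalIntegrable (fun s : ℝ => (l' - l) • ((s ^ m) • DΨ (l, s * t) (1, 0)) +
      (t' - t) • ((s ^ (m + 1)) • DΨ (l, s * t) (0, 1))) MeasureTheory.volume 0 1 :=
    (ci3.add ci4).intervalIntegrable
  have hI : hadInt m Ψ (l', t') - hadInt m Ψ (l, t) -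
      ((ContinuousLinearMap.fst ℝ ℝ ℝ).smulRight (hadInt m (fun z => DΨ z (1, 0)) (l, t)) +
        (ContinuousLinearMap.snd ℝ ℝ ℝ).smulRight (hadInt (m + 1) (fun z => DΨ z (0, 1)) (l, t)))
        (((l', t') : ℝ × ℝ) - (l, t)) =
      ∫ s in (0:ℝ)..1, ((s ^ m) • Ψ (l', s * t') - (s ^ m) • Ψ (l, s * t) -
        ((l' - l) • ((s ^ m) • DΨ (l, s * t) (1, 0)) +
          (t' - t) • ((s ^ (m + 1)) • DΨ (l, s * t) (0, 1)))) := by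
    rw [intervalIntegral.integral_sub i12 i34, intervalIntegral.integral_sub i1 i2,
      intervalIntegral.integral_add i3 i4, intervalIntegral.integral_smul,
      intervalIntegral.integral_smul]
    simp only [hadInt, ContinuousLinearMap.add_apply, ContinuousLinearMap.smulRight_apply,
      ContinuousLinearMap.coe_fst', ContinuousLinearMap.coe_snd', Prod.mk_sub_mk]
  show ‖hadInt m Ψ (l', t') - hadInt m Ψ (l, t) -
      ((ContinuousLinearMap.fst ℝ ℝ ℝ).smulRight (hadInt m (fun z => DΨ z (1, 0)) (l, t)) +
        (ContinuousLinearMap.snd ℝ ℝ ℝ).smulRight (hadInt (m + 1) (fun z => DΨ z (0, 1)) (l, t)))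
        (((l', t') : ℝ × ℝ) - (l, t))‖ ≤ ε * ‖((l', t') : ℝ × ℝ) - (l, t)‖
  rw [hI]
  calc _ ≤ ε * ‖((l', t') : ℝ × ℝ) - (l, t)‖ * |(1:ℝ) - 0| :=
        intervalIntegral.norm_integral_le_of_norm_le_const (fun s hs => ?_)
    _ = ε * ‖((l', t') : ℝ × ℝ) - (l, t)‖ := by norm_num
  rw [uIoc_of_le zero_le_one] at hs
  have heq : (s ^ m) • Ψ (l', s * t') - (s ^ m) • Ψ (l, s * t) -
        ((l' - l) • ((s ^ m) • DΨ (l, s * t) (1, 0)) +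
          (t' - t) • ((s ^ (m + 1)) • DΨ (l, s * t) (0, 1))) =
      (s ^ m) • (Ψ (l', s * t') - Ψ (l, s * t) - DΨ (l, s * t) ((l', s * t') - (l, s * t))) := by
    rw [Prod.mk_sub_mk, clm_prod_decomp (DΨ (l, s * t)) (l' - l) (s * t' - s * t)]
    module
  rw [heq, norm_smul, norm_pow, Real.norm_eq_abs, abs_of_nonneg hs.1.le]
  calc s ^ m * _ ≤ 1 * (ε * ‖((l', t') : ℝ × ℝ) - (l, t)‖) :=
        mul_le_mul (pow_le_one₀ hs.1.le hs.2) (hpt s ⟨hs.1.le, hs.2⟩) (norm_nonneg _) zero_le_one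
    _ = _ := one_mul _

lemma had_contDiffOn : ∀ n : ℕ, ∀ (m : ℕ) (Ψ : ℝ × ℝ → V),
    ContDiffOn ℝ (⊤ : ℕ∞) Ψ (Ioi (0:ℝ) ×ˢ Ici (0:ℝ)) →
    ContDiffOn ℝ n (hadInt m Ψ) (Ioi (0:ℝ) ×ˢ Ici (0:ℝ)) := by
  have hud : UniqueDiffOn ℝ (Ioi (0:ℝ) ×ˢ Ici (0:ℝ)) :=
    (isOpen_Ioi.uniqueDiffOn).prod (uniqueDiffOn_Ici 0)
  have h1 : ∀ Ψ : ℝ × ℝ → V, ContDiffOn ℝ (⊤ : ℕ∞) Ψ (Ioi (0:ℝ) ×ˢ Ici (0:ℝ)) →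
      ContDiffOn ℝ 1 Ψ (Ioi (0:ℝ) ×ˢ Ici (0:ℝ)) := fun Ψ h => h.of_le (by simp)
  have hder : ∀ Ψ : ℝ × ℝ → V, ContDiffOn ℝ (⊤ : ℕ∞) Ψ (Ioi (0:ℝ) ×ˢ Ici (0:ℝ)) →
      ∀ v : ℝ × ℝ, ContDiffOn ℝ (⊤ : ℕ∞)
        (fun z => fderivWithin ℝ Ψ (Ioi (0:ℝ) ×ˢ Ici (0:ℝ)) z v) (Ioi (0:ℝ) ×ˢ Ici (0:ℝ)) :=
    fun Ψ h v => (((contDiffOn_infty_iff_fderivWithin hud).mp h).2).clm_apply contDiffOn_const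
  intro n
  induction n with
  | zero =>
    intro m Ψ hΨ
    refine contDiffOn_zero.mpr ?_
    intro y hy
    exact (had_hasFDeriv (h1 Ψ hΨ) m hy).continuousWithinAt
  | succ n ih =>
    intro m Ψ hΨ
    rw [Nat.cast_succ]
    refine (contDiffOn_succ_iff_fderivWithin hud).mpr ⟨?_, ?_, ?_⟩
    · intro y hy
      exact (had_hasFDeriv (h1 Ψ hΨ) m hy).differentiableWithinAt
    · intro h
      exact absurd h (by simp)
    · refine (ContDiffOn.add
        ((contDiffOn_const (c := ContinuousLinearMap.fst ℝ ℝ ℝ)).smulRight (ih m _ (hder Ψ hΨ (1, 0))))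
        ((contDiffOn_const (c := ContinuousLinearMap.snd ℝ ℝ ℝ)).smulRight
          (ih (m + 1) _ (hder Ψ hΨ (0, 1))))).congr ?_
      intro y hy
      exact (had_hasFDeriv (h1 Ψ hΨ) m hy).fderivWithin (hud y hy)

end HadamardAux

/-- If `φ` is smooth, satisfies `(C_k)` and `φ(λ, 0) = 0` for all `λ > 0`,
then the function `(λ, t) ↦ φ(λ, t)/t` (extended by `∂φ/∂t(λ, 0)` at `t = 0`) is smooth
and satisfies the cocycle relation `(C_{k−1})`. -/
theorem stmt4 {V : Type*} [NormedAddCommGroup V] [NormedSpace ℂ V]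
    [FiniteDimensional ℂ V] (k : ℂ) (φ : ℝ → ℝ → V)
    (hsmooth : ContDiffOn ℝ (⊤ : ℕ∞) (fun p : ℝ × ℝ => φ p.1 p.2) (Ioi 0 ×ˢ Ici 0))
    (hcoc : ∀ l₁ > (0 : ℝ), ∀ l₂ > (0 : ℝ), ∀ t ≥ (0 : ℝ),
      φ (l₁ * l₂) t = ((l₂ : ℂ) ^ (-k)) • φ l₁ (t * l₂) + φ l₂ t)
    (hzero : ∀ l > (0 : ℝ), φ l 0 = 0) :
    ∃ g : ℝ → ℝ → V,
      ContDiffOn ℝ (⊤ : ℕ∞) (fun p : ℝ × ℝ => g p.1 p.2) (Ioi 0 ×ˢ Ici 0) ∧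
      (∀ l > (0 : ℝ), ∀ t > (0 : ℝ), g l t = ((t : ℂ)⁻¹) • φ l t) ∧
      (∀ l > (0 : ℝ), g l 0 = derivWithin (φ l) (Ici 0) 0) ∧
      (∀ l₁ > (0 : ℝ), ∀ l₂ > (0 : ℝ), ∀ t ≥ (0 : ℝ),
        g (l₁ * l₂) t = ((l₂ : ℂ) ^ (-(k - 1))) • g l₁ (t * l₂) + g l₂ t) := by
  haveI : CompleteSpace V := FiniteDimensional.complete ℂ V
  haveI : SMulCommClass ℝ ℂ V :=
    ⟨fun r c v => by
      rw [← Complex.coe_smul, ← Complex.coe_smul, smul_smul, smul_smul, mul_comm]⟩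
  set S : Set (ℝ × ℝ) := Ioi 0 ×ˢ Ici 0 with hS
  set Φ : ℝ × ℝ → V := fun p => φ p.1 p.2 with hΦ
  have hdiff : DifferentiableOn ℝ Φ S := hsmooth.differentiableOn (by simp)
  set D : ℝ → ℝ → V := fun l t => fderivWithin ℝ Φ S (l, t) ((0 : ℝ), (1 : ℝ)) with hD
  have hasD : ∀ l, 0 < l → ∀ t, 0 ≤ t → HasDerivWithinAt (φ l) (D l t) (Ici 0) t := by
    intro l hl t ht
    have hmem : ((l, t) : ℝ × ℝ) ∈ S := ⟨hl, ht⟩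
    have h1 : HasFDerivWithinAt Φ (fderivWithin ℝ Φ S (l, t)) S (l, t) :=
      (hdiff _ hmem).hasFDerivWithinAt
    have h2 : HasDerivWithinAt (fun u : ℝ => ((l, u) : ℝ × ℝ)) ((0 : ℝ), (1 : ℝ)) (Ici 0) t :=
      ((hasDerivAt_const t l).prodMk (hasDerivAt_id t)).hasDerivWithinAt
    exact h1.comp_hasDerivWithinAt t h2 (fun u hu => ⟨hl, hu⟩)
  have hDW : ∀ l, 0 < l → derivWithin (φ l) (Ici (0 : ℝ)) 0 = D l 0 := fun l hl =>
    (hasD l hl 0 le_rfl).derivWithin (uniqueDiffOn_Ici 0 0 self_mem_Ici)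
  classical
  set g : ℝ → ℝ → V := fun l t =>
    if t = 0 then derivWithin (φ l) (Ici 0) 0 else t⁻¹ • φ l t with hg
  have hgpos : ∀ l : ℝ, ∀ t : ℝ, t ≠ 0 → g l t = t⁻¹ • φ l t := by
    intro l t ht
    rw [hg]
    exact if_neg ht
  have hg0 : ∀ l : ℝ, g l 0 = derivWithin (φ l) (Ici 0) 0 := by
    intro l
    rw [hg]
    simp only
    exact if_pos trivial
  refine ⟨g, ?_, ?_, ?_, ?_⟩
  · -- smoothness
    intro x hx
    have hx1 : 0 < x.1 := hx.1
    have hx2 : (0 : ℝ) ≤ x.2 := hx.2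
    rcases hx2.eq_or_lt with h0 | hpos
    · -- boundary case
      obtain ⟨a, t⟩ := x
      simp only at h0
      subst h0
      have ha : (0 : ℝ) < a := hx1
      have hud : UniqueDiffOn ℝ S := (isOpen_Ioi.uniqueDiffOn).prod (uniqueDiffOn_Ici 0)
      set D' : ℝ × ℝ → V := fun z => fderivWithin ℝ Φ S z ((0:ℝ), (1:ℝ)) with hD'
      have hD'smooth : ContDiffOn ℝ (⊤ : ℕ∞) D' S :=
        (((contDiffOn_infty_iff_fderivWithin hud).mp hsmooth).2).clm_apply contDiffOn_const
      have hHad : ContDiffOn ℝ (⊤ : ℕ∞) (hadInt 0 D') S :=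
        contDiffOn_infty.mpr (fun n => had_contDiffOn n 0 D' hD'smooth)
      have hEq : ∀ y ∈ S, g y.1 y.2 = hadInt 0 D' y := by
        rintro ⟨l, t⟩ ⟨hl, ht⟩
        show g l t = hadInt 0 D' (l, t)
        rcases (show (0:ℝ) ≤ t from ht).eq_or_lt with h | h
        · subst h
          rw [hg0, hDW l hl]
          simp only [hadInt, pow_zero, one_smul, mul_zero, intervalIntegral.integral_const,
            sub_zero]
          rfl
        · rw [hgpos l t h.ne']
          have hcont : ContinuousOn (φ l) (Icc 0 t) := fun u hu =>
            (hasD l hl u hu.1).continuousWithinAt.mono Icc_subset_Ici_self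
          have hderiv : ∀ u ∈ Ioo 0 t, HasDerivWithinAt (φ l) (D l u) (Ioi u) u := fun u hu =>
            (hasD l hl u hu.1.le).mono (fun v hv => le_of_lt (lt_trans hu.1 hv))
          have hint : IntervalIntegrable (D l) MeasureTheory.volume 0 t := by
            refine ContinuousOn.intervalIntegrable ?_
            exact hD'smooth.continuousOn.comp (continuous_const.prodMk continuous_id).continuousOn
              (fun u hu => ⟨hl, by rw [uIcc_of_le h.le] at hu; exact hu.1⟩)
          have hftc : ∫ u in (0:ℝ)..t, D l u = φ l t - φ l 0 :=
            intervalIntegral.integral_eq_sub_of_hasDeriv_right_of_le h.le hcont hderiv hint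
          have hcv : ∫ s in (0:ℝ)..1, D l (s * t) = t⁻¹ • ∫ u in (0:ℝ)..t, D l u := by
            rw [intervalIntegral.integral_comp_mul_right (D l) h.ne', zero_mul, one_mul]
          rw [hftc, hzero l hl, sub_zero] at hcv
          rw [← hcv]
          simp only [hadInt, pow_zero, one_smul]
          rfl
      exact (hHad.congr hEq) _ hx
    · -- interior case
      have hS_nhds : S ∈ 𝓝 x := by
        have hmem : Ioi (0 : ℝ) ×ˢ Ioi (0 : ℝ) ∈ 𝓝 x :=
          (isOpen_Ioi.prod isOpen_Ioi).mem_nhds ⟨hx1, hpos⟩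
        exact mem_of_superset hmem (prod_mono subset_rfl Ioi_subset_Ici_self)
      have hΦa : ContDiffAt ℝ (⊤ : ℕ∞) Φ x := (hsmooth x hx).contDiffAt hS_nhds
      have hga : ContDiffAt ℝ (⊤ : ℕ∞) (fun p : ℝ × ℝ => (p.2)⁻¹ • Φ p) x :=
        (contDiffAt_snd.inv (ne_of_gt hpos)).smul hΦa
      have hevent : ∀ᶠ p : ℝ × ℝ in 𝓝 x, (fun p : ℝ × ℝ => (p.2)⁻¹ • Φ p) p = g p.1 p.2 := by
        have hmem : {p : ℝ × ℝ | 0 < p.2} ∈ 𝓝 x :=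
          (isOpen_lt continuous_const continuous_snd).mem_nhds hpos
        filter_upwards [hmem] with p hp
        rw [hgpos p.1 p.2 (ne_of_gt hp)]
      exact (hga.congr_of_eventuallyEq (Filter.EventuallyEq.symm hevent)).contDiffWithinAt
  · -- value for positive t
    intro l _ t ht
    rw [hgpos l t (ne_of_gt ht), ← Complex.ofReal_inv, Complex.coe_smul]
  · -- value at 0
    intro l _
    exact hg0 l
  · -- cocycle
    intro l₁ hl₁ l₂ hl₂ t ht
    have hl₂ne : (l₂ : ℂ) ≠ 0 := Complex.ofReal_ne_zero.mpr (ne_of_gt hl₂)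
    have hcpow : (l₂ : ℂ) ^ (-(k - 1)) = (l₂ : ℂ) ^ (-k) * l₂ := by
      rw [show -(k - 1) = -k + 1 by ring, Complex.cpow_add _ _ hl₂ne, Complex.cpow_one]
    rcases ht.eq_or_lt with h0 | hpos
    · subst h0
      rw [zero_mul, hg0, hg0, hg0, hDW _ (mul_pos hl₁ hl₂), hDW _ hl₁, hDW _ hl₂]
      -- differentiate the cocycle identity at 0
      have hinner : HasDerivWithinAt (fun t : ℝ => t * l₂) l₂ (Ici (0 : ℝ)) 0 :=
        (hasDerivAt_mul_const l₂).hasDerivWithinAt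
      have houter : HasDerivWithinAt (φ l₁) (D l₁ 0) (Ici 0) ((0 : ℝ) * l₂) := by
        rw [zero_mul]; exact hasD l₁ hl₁ 0 le_rfl
      have h1 : HasDerivWithinAt (fun t : ℝ => φ l₁ (t * l₂)) (l₂ • D l₁ 0) (Ici 0) 0 :=
        houter.scomp 0 hinner (fun u hu => mul_nonneg hu (le_of_lt hl₂))
      have h2 := (h1.const_smul ((l₂ : ℂ) ^ (-k))).add (hasD l₂ hl₂ 0 le_rfl)
      have h3 : HasDerivWithinAt (φ (l₁ * l₂))
          (((l₂ : ℂ) ^ (-k)) • l₂ • D l₁ 0 + D l₂ 0) (Ici 0) 0 := by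
        refine h2.congr (fun u hu => ?_) ?_
        · exact hcoc l₁ hl₁ l₂ hl₂ u hu
        · exact hcoc l₁ hl₁ l₂ hl₂ 0 le_rfl
      have h4 := h3.derivWithin (uniqueDiffOn_Ici 0 0 self_mem_Ici)
      rw [hDW _ (mul_pos hl₁ hl₂)] at h4
      rw [h4, ← Complex.coe_smul (l₂) (D l₁ 0), smul_smul, ← hcpow]
    · have htl₂ : (0 : ℝ) < t * l₂ := mul_pos hpos hl₂
      rw [hgpos _ _ (ne_of_gt hpos), hgpos _ _ (ne_of_gt htl₂), hgpos _ _ (ne_of_gt hpos)]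
      rw [hcoc l₁ hl₁ l₂ hl₂ t ht, smul_add]
      congr 1
      rw [← Complex.coe_smul (t⁻¹), ← Complex.coe_smul ((t * l₂)⁻¹), smul_smul, smul_smul]
      congr 1
      have htne : (t : ℂ) ≠ 0 := Complex.ofReal_ne_zero.mpr (ne_of_gt hpos)
      push_cast
      rw [hcpow]
      field_simp
end

section
/- Let k ∈ ℂ with k ≠ 0 and φ : ℝ>0 × ℝ≥0 → V continuous satisfying the cocycle relation (C_k). Then there exists a unique v ∈ V such that φ(λ, 0) = (λ^{-k} − 1) v for all λ > 0. -/
open Set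

/-!
Write `χ(λ) = λ^{-k}` and `g(λ) = φ(λ, 0)`. At `t = 0` the cocycle relation reads
`g(λμ) = χ(μ) g(λ) + g(μ)`, and comparing it with the same relation for `μλ` gives
`(χ(μ) - 1) g(λ) = (χ(λ) - 1) g(μ)`. Since `k ≠ 0` there is a `λ₀` with `χ(λ₀) ≠ 1`, and then
`v = (χ(λ₀) - 1)⁻¹ g(λ₀)` satisfies `g(λ) = (χ(λ) - 1) v` for every `λ`, also where `χ(λ) = 1`.
-/

section Cocycle

variable {G K V : Type*} [CommMagma G] [Field K] [AddCommGroup V] [Module K V]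
  {S : Set G} {χ : G → K} {g : G → V}

theorem sub_one_smul_comm_of_cocycle
    (hg : ∀ a ∈ S, ∀ b ∈ S, g (a * b) = χ b • g a + g b) {a b : G} (ha : a ∈ S) (hb : b ∈ S) :
    (χ b - 1) • g a = (χ a - 1) • g b := by
  have hab := hg a ha b hb
  rw [mul_comm, hg b hb a ha] at hab
  rw [sub_smul, sub_smul, one_smul, one_smul, sub_eq_sub_iff_add_eq_add]
  linear_combination (norm := abel) hab.symm

theorem existsUnique_eq_sub_one_smul_of_cocycle
    (hg : ∀ a ∈ S, ∀ b ∈ S, g (a * b) = χ b • g a + g b) {c : G} (hc : c ∈ S) (hχc : χ c ≠ 1) :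
    ∃! v : V, ∀ b ∈ S, g b = (χ b - 1) • v := by
  have hc' : χ c - 1 ≠ 0 := sub_ne_zero.mpr hχc
  refine ⟨(χ c - 1)⁻¹ • g c, fun b hb => ?_, fun w hw => ?_⟩
  · rw [smul_comm, sub_one_smul_comm_of_cocycle hg hc hb, inv_smul_smul₀ hc']
  · rw [hw c hc, inv_smul_smul₀ hc']

end Cocycle

theorem ofReal_exp_cpow (x : ℝ) (z : ℂ) : (Real.exp x : ℂ) ^ z = Complex.exp (z * x) := by
  rw [Complex.cpow_def_of_ne_zero (by exact_mod_cast (Real.exp_pos x).ne'),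
    ← Complex.ofReal_log (Real.exp_pos x).le, Real.log_exp, mul_comm]

theorem exists_cexp_mul_ofReal_ne_one {k : ℂ} (hk : k ≠ 0) : ∃ x : ℝ, Complex.exp (k * x) ≠ 1 := by
  by_contra! hconst
  have hderiv : HasDerivAt (fun x : ℝ => Complex.exp (k * x)) k 0 := by
    simpa using ((hasDerivAt_id (0 : ℝ)).ofReal_comp.const_mul k).cexp
  have hderiv_const : HasDerivAt (fun x : ℝ => Complex.exp (k * x)) 0 0 := by
    simpa [hconst] using hasDerivAt_const (0 : ℝ) (1 : ℂ)
  exact hk (hderiv.unique hderiv_const)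

theorem exists_pos_ofReal_cpow_ne_one {k : ℂ} (hk : k ≠ 0) : ∃ l : ℝ, 0 < l ∧ (l : ℂ) ^ k ≠ 1 := by
  obtain ⟨x, hx⟩ := exists_cexp_mul_ofReal_ne_one hk
  exact ⟨Real.exp x, Real.exp_pos x, by rwa [ofReal_exp_cpow]⟩

theorem stmt6_general {V : Type*} [NormedAddCommGroup V] [NormedSpace ℂ V]
    (k : ℂ) (hk : k ≠ 0) (φ : ℝ → ℝ → V)
    (hcoc : ∀ l₁ > (0 : ℝ), ∀ l₂ > (0 : ℝ), ∀ t ≥ (0 : ℝ),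
      φ (l₁ * l₂) t = ((l₂ : ℂ) ^ (-k)) • φ l₁ (t * l₂) + φ l₂ t) :
    ∃! v : V, ∀ l > (0 : ℝ), φ l 0 = (((l : ℂ) ^ (-k)) - 1) • v := by
  obtain ⟨l₀, hl₀, hχ⟩ := exists_pos_ofReal_cpow_ne_one (neg_ne_zero.mpr hk)
  simpa using existsUnique_eq_sub_one_smul_of_cocycle (S := Ioi 0)
    (χ := fun l : ℝ => (l : ℂ) ^ (-k)) (g := fun l => φ l 0)
    (fun a ha b hb => by simpa using hcoc a ha b hb 0 le_rfl) (mem_Ioi.mpr hl₀) hχ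

/-- For `k ≠ 0` and `φ` continuous satisfying `(C_k)`, there is a unique
`v ∈ V` with `φ(λ, 0) = (λ^{-k} − 1) • v` for all `λ > 0`. -/
theorem stmt6 {V : Type*} [NormedAddCommGroup V] [NormedSpace ℂ V]
    [FiniteDimensional ℂ V] (k : ℂ) (hk : k ≠ 0) (φ : ℝ → ℝ → V)
    (hcont : ContinuousOn (fun p : ℝ × ℝ => φ p.1 p.2) (Ioi 0 ×ˢ Ici 0))
    (hcoc : ∀ l₁ > (0 : ℝ), ∀ l₂ > (0 : ℝ), ∀ t ≥ (0 : ℝ),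
      φ (l₁ * l₂) t = ((l₂ : ℂ) ^ (-k)) • φ l₁ (t * l₂) + φ l₂ t) :
    ∃! v : V, ∀ l > (0 : ℝ), φ l 0 = (((l : ℂ) ^ (-k)) - 1) • v :=
  stmt6_general k hk φ hcoc
end

section
/- Let k ∈ ℤ≥0 and suppose ψ : ℝ≥0 → V smooth and c ∈ V satisfy λ^{-k} ψ(λt) − ψ(t) = −t^k log(λ) c for all λ > 0, t ≥ 0. Then c = 0. Consequently, in the decomposition φ(λ,t) = λ^{-k}ψ(λt) − ψ(t) + t^k log(λ)c for a smooth solution φ of (C_k) with k ∈ ℤ≥0, the element c is uniquely determined. -/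
open Set Filter Topology
open Set Filter Topology

lemma aux_log {W : Type*} [NormedAddCommGroup W] [NormedSpace ℝ W] :
    ∀ (k : ℕ) (h : ℝ → W) (a b : W), ContDiffOn ℝ (⊤ : ℕ∞) h (Ici 0) →
    (∀ t > (0:ℝ), h t = (t ^ k * Real.log t) • a + (t ^ k) • b) → a = 0 := by
  intro k
  induction k with
  | zero =>
    intro h a b hc heq
    by_contra ha
    have hcont : ContinuousWithinAt h (Ici 0) 0 :=
      hc.continuousOn.continuousWithinAt (by simp)
    have h1 : Tendsto h (𝓝[>] (0:ℝ)) (𝓝 (h 0)) :=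
      hcont.tendsto.mono_left (nhdsWithin_mono _ Ioi_subset_Ici_self)
    have h2 : Tendsto (fun t => ‖h t‖) (𝓝[>] (0:ℝ)) (𝓝 ‖h 0‖) := h1.norm
    have h3 : Tendsto (fun t : ℝ => ‖h t‖) (𝓝[>] (0:ℝ)) atTop := by
      have hlog : Tendsto Real.log (𝓝[>] (0:ℝ)) atBot :=
        Real.tendsto_log_nhdsGT_zero
      have habs : Tendsto (fun t : ℝ => |Real.log t|) (𝓝[>] (0:ℝ)) atTop :=
        tendsto_abs_atBot_atTop.comp hlog
      have hlin : Tendsto (fun t : ℝ => |Real.log t| * ‖a‖ - ‖b‖) (𝓝[>] (0:ℝ)) atTop := by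
        apply tendsto_atTop_add_const_right
        exact habs.atTop_mul_const (norm_pos_iff.mpr ha)
      apply tendsto_atTop_mono' _ ?_ hlin
      filter_upwards [self_mem_nhdsWithin] with t (ht : t ∈ Ioi (0:ℝ))
      have := heq t ht
      simp only [pow_zero, one_mul, one_smul] at this
      rw [this]
      calc |Real.log t| * ‖a‖ - ‖b‖ = ‖Real.log t • a‖ - ‖b‖ := by
            rw [norm_smul, Real.norm_eq_abs]
        _ ≤ ‖Real.log t • a + b‖ := by
            have := norm_le_add_norm_add (Real.log t • a) b
            linarith
    exact not_tendsto_atTop_of_tendsto_nhds h2 h3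
  | succ k ih =>
    intro h a b hc heq
    have hc' : ContDiffOn ℝ (⊤ : ℕ∞) (derivWithin h (Ici 0)) (Ici 0) :=
      hc.derivWithin (uniqueDiffOn_Ici 0) (by simp)
    have key : ∀ t > (0:ℝ), derivWithin h (Ici 0) t
        = (t ^ k * Real.log t) • (((k:ℝ)+1) • a) + (t ^ k) • (a + ((k:ℝ)+1) • b) := by
      intro t ht
      have hmem : Ici (0:ℝ) ∈ 𝓝 t := mem_of_superset (isOpen_Ioi.mem_nhds ht) Ioi_subset_Ici_self
      rw [derivWithin_of_mem_nhds hmem]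
      have hg : HasDerivAt (fun x : ℝ => (x ^ (k+1) * Real.log x) • a + (x ^ (k+1)) • b)
          (((((k:ℝ)+1) * t ^ k) * Real.log t + t ^ (k+1) * t⁻¹) • a + (((k:ℝ)+1) * t ^ k) • b) t := by
        have hp : HasDerivAt (fun x : ℝ => x ^ (k+1)) (((k:ℝ)+1) * t ^ k) t := by
          have := hasDerivAt_pow (k+1) t
          simpa using this
        have hlog : HasDerivAt Real.log t⁻¹ t := Real.hasDerivAt_log (ne_of_gt ht)
        exact ((hp.mul hlog).smul_const a).add (hp.smul_const b)
      have heq' : h =ᶠ[𝓝 t] fun x : ℝ => (x ^ (k+1) * Real.log x) • a + (x ^ (k+1)) • b := by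
        filter_upwards [isOpen_Ioi.mem_nhds ht] with x (hx : x ∈ Ioi (0:ℝ))
        exact heq x hx
      rw [(hg.congr_of_eventuallyEq heq').deriv]
      have ht' : t ≠ 0 := ne_of_gt ht
      match_scalars
      · field_simp; ring
      · field_simp
    have := ih (derivWithin h (Ici 0)) (((k:ℝ)+1) • a) (a + ((k:ℝ)+1) • b) hc' key
    have hk : ((k:ℝ)+1) ≠ 0 := by positivity
    rcases smul_eq_zero.mp this with h0 | h0
    · exact absurd h0 hk
    · exact h0
open Set Filter Topology

lemma stmt9_first {V : Type*} [NormedAddCommGroup V] [NormedSpace ℂ V] (k : ℕ)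
    (ψ : ℝ → V) (c : V) (hψ : ContDiffOn ℝ (⊤ : ℕ∞) ψ (Ici 0))
    (heq : ∀ l > (0 : ℝ), ∀ t ≥ (0 : ℝ),
      ((l : ℂ) ^ (-(k : ℂ))) • ψ (l * t) - ψ t
        = -((((t : ℂ) ^ k) * (Real.log l : ℂ)) • c)) : c = 0 := by
  have key : ∀ t > (0:ℝ), ψ t = (t ^ k * Real.log t) • (-c) + (t ^ k) • (ψ 1) := by
    intro l hl
    have h1 := heq l hl 1 zero_le_one
    rw [mul_one] at h1
    have e1 : ((l:ℂ) ^ (-(k:ℂ))) = ((((l ^ k)⁻¹ : ℝ)) : ℂ) := by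
      rw [Complex.cpow_neg, Complex.cpow_natCast]
      push_cast
      ring
    rw [e1] at h1
    simp only [Complex.ofReal_one, one_pow, one_mul] at h1
    rw [Complex.coe_smul, Complex.coe_smul] at h1
    -- h1 : (l^k)⁻¹ • ψ l - ψ 1 = -(Real.log l • c)  (real smuls)
    have hlk : (l:ℝ) ^ k ≠ 0 := pow_ne_zero _ (ne_of_gt hl)
    have h2 : ((l ^ k)⁻¹ : ℝ) • ψ l = ψ 1 - Real.log l • c := by
      rw [sub_eq_iff_eq_add] at h1
      rw [h1]; abel
    have h3 : ψ l = (l ^ k : ℝ) • (ψ 1 - Real.log l • c) :=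
      (inv_smul_eq_iff₀ hlk).mp h2
    rw [h3, smul_sub, smul_smul, smul_neg]
    abel
  have h0 := aux_log k ψ (-c) (ψ 1) hψ key
  simpa using h0

/-- For `k ∈ ℤ≥0`, if `ψ : ℝ≥0 → V` smooth and `c ∈ V` satisfy
`λ^{-k} • ψ(λ t) − ψ(t) = −t^k log(λ) • c` for all `λ > 0`, `t ≥ 0`, then `c = 0`.
Consequently, the constant `c` in the decomposition of a smooth solution of `(C_k)`
is uniquely determined. -/
theorem stmt9 {V : Type*} [NormedAddCommGroup V] [NormedSpace ℂ V]
    [FiniteDimensional ℂ V] (k : ℕ) :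
    (∀ (ψ : ℝ → V) (c : V), ContDiffOn ℝ (⊤ : ℕ∞) ψ (Ici 0) →
      (∀ l > (0 : ℝ), ∀ t ≥ (0 : ℝ),
        ((l : ℂ) ^ (-(k : ℂ))) • ψ (l * t) - ψ t
          = -((((t : ℂ) ^ k) * (Real.log l : ℂ)) • c)) →
      c = 0) ∧
    (∀ (φ : ℝ → ℝ → V) (ψ₁ ψ₂ : ℝ → V) (c₁ c₂ : V),
      ContDiffOn ℝ (⊤ : ℕ∞) ψ₁ (Ici 0) → ContDiffOn ℝ (⊤ : ℕ∞) ψ₂ (Ici 0) →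
      (∀ l > (0 : ℝ), ∀ t ≥ (0 : ℝ),
        φ l t = ((l : ℂ) ^ (-(k : ℂ))) • ψ₁ (l * t) - ψ₁ t
          + (((t : ℂ) ^ k) * (Real.log l : ℂ)) • c₁) →
      (∀ l > (0 : ℝ), ∀ t ≥ (0 : ℝ),
        φ l t = ((l : ℂ) ^ (-(k : ℂ))) • ψ₂ (l * t) - ψ₂ t
          + (((t : ℂ) ^ k) * (Real.log l : ℂ)) • c₂) →
      c₁ = c₂) := by
  constructor
  · exact fun ψ c hψ heq => stmt9_first k ψ c hψ heq
  · intro φ ψ₁ ψ₂ c₁ c₂ h1 h2 e1 e2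
    have hsub : c₁ - c₂ = 0 := by
      apply stmt9_first k (ψ₁ - ψ₂) (c₁ - c₂) (h1.sub h2)
      intro l hl t ht
      have h := (e1 l hl t ht).symm.trans (e2 l hl t ht)
      simp only [Pi.sub_apply, smul_sub]
      rw [← sub_eq_zero]
      rw [← sub_eq_zero] at h
      rw [← h]
      abel
    exact sub_eq_zero.mp hsub
end

section
/- Let k ∈ ℤ≥0 and φ : ℝ>0 × ℝ≥0 → V smooth satisfying the cocycle relation (C_k). Then the quantity c(λ) := (1/(k! log λ)) · (∂^k/∂t^k)|_{t=0} φ(λ, t) is independent of λ ∈ ℝ>0 \ {1}, and equals the constant c in the decomposition φ(λ,t) = λ^{-k}ψ(λt) − ψ(t) + t^k log(λ) c. -/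
open Set

section aux
variable {W : Type*} [NormedAddCommGroup W] [NormedSpace ℝ W]

lemma aux_slice (F : ℝ × ℝ → W) (hF : ContDiffOn ℝ (⊤ : ℕ∞) F (Ioi 0 ×ˢ Ici 0)) (j : ℕ) :
    ∀ l ∈ Ioi (0:ℝ), ∀ t ∈ Ici (0:ℝ),
      iteratedDerivWithin j (fun u => F (l, u)) (Ici 0) t
        = iteratedFDerivWithin ℝ j F (Ioi 0 ×ˢ Ici 0) (l, t) (fun _ => ((0:ℝ), (1:ℝ))) := by
  induction j with
  | zero =>
    intro l hl t ht
    simp [iteratedFDerivWithin_zero_apply]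
  | succ j IH =>
    intro l hl t ht
    have hs : UniqueDiffOn ℝ ((Ioi (0:ℝ)) ×ˢ (Ici (0:ℝ))) :=
      (uniqueDiffOn_Ioi 0).prod (uniqueDiffOn_Ici 0)
    have hu : UniqueDiffOn ℝ (Ici (0:ℝ)) := uniqueDiffOn_Ici 0
    have hmem : ((l, t) : ℝ × ℝ) ∈ (Ioi (0:ℝ)) ×ˢ (Ici (0:ℝ)) := ⟨hl, ht⟩
    have hdiff : DifferentiableOn ℝ
        (iteratedFDerivWithin ℝ j F ((Ioi (0:ℝ)) ×ˢ (Ici (0:ℝ)))) ((Ioi (0:ℝ)) ×ˢ (Ici (0:ℝ))) :=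
      hF.differentiableOn_iteratedFDerivWithin (by exact_mod_cast ENat.coe_lt_top j) hs
    have hG : HasFDerivWithinAt (iteratedFDerivWithin ℝ j F ((Ioi (0:ℝ)) ×ˢ (Ici (0:ℝ))))
        (fderivWithin ℝ (iteratedFDerivWithin ℝ j F ((Ioi (0:ℝ)) ×ˢ (Ici (0:ℝ))))
          ((Ioi (0:ℝ)) ×ˢ (Ici (0:ℝ))) (l, t))
        ((Ioi (0:ℝ)) ×ˢ (Ici (0:ℝ))) (l, t) := (hdiff (l, t) hmem).hasFDerivWithinAt
    have hι : HasDerivWithinAt (fun u : ℝ => ((l : ℝ), u)) (((0:ℝ), (1:ℝ))) (Ici 0) t :=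
      ((hasDerivAt_const t l).prodMk (hasDerivAt_id' t)).hasDerivWithinAt
    have hmaps : MapsTo (fun u : ℝ => ((l:ℝ), u)) (Ici 0) ((Ioi (0:ℝ)) ×ˢ (Ici (0:ℝ))) :=
      fun u hu' => ⟨hl, hu'⟩
    have hcomp := hG.comp_hasDerivWithinAt t hι hmaps
    have heval := (ContinuousMultilinearMap.apply ℝ (fun _ : Fin j => ℝ × ℝ) W
        (fun _ => ((0:ℝ),(1:ℝ)))).hasFDerivAt.comp_hasDerivWithinAt t hcomp
    have hEq : Set.EqOn (iteratedDerivWithin j (fun u => F (l, u)) (Ici 0))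
        (fun u => (ContinuousMultilinearMap.apply ℝ (fun _ : Fin j => ℝ × ℝ) W
          (fun _ => ((0:ℝ),(1:ℝ))))
          (iteratedFDerivWithin ℝ j F ((Ioi (0:ℝ)) ×ˢ (Ici (0:ℝ))) (l, u))) (Ici 0) :=
      fun u hu' => IH l hl u hu'
    rw [iteratedDerivWithin_succ, derivWithin_congr hEq (hEq ht),
      iteratedFDerivWithin_succ_apply_left]
    exact heval.derivWithin (hu t ht)

lemma aux_scale (f : ℝ → W) (hf : ContDiffOn ℝ (⊤ : ℕ∞) f (Ici 0)) (c : ℝ) (hc : 0 < c) (n : ℕ) :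
    ∀ t ∈ Ici (0:ℝ),
      iteratedDerivWithin n (fun u => f (u * c)) (Ici 0) t
        = c ^ n • iteratedDerivWithin n f (Ici 0) (t * c) := by
  induction n with
  | zero => intro t ht; simp
  | succ n IH =>
    intro t ht
    have hu : UniqueDiffOn ℝ (Ici (0:ℝ)) := uniqueDiffOn_Ici 0
    have htc : t * c ∈ Ici (0:ℝ) := mul_nonneg ht hc.le
    have hdiff : DifferentiableOn ℝ (iteratedDerivWithin n f (Ici 0)) (Ici 0) :=
      hf.differentiableOn_iteratedDerivWithin (by exact_mod_cast ENat.coe_lt_top n) hu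
    have hg : HasDerivWithinAt (iteratedDerivWithin n f (Ici 0))
        (derivWithin (iteratedDerivWithin n f (Ici 0)) (Ici 0) (t * c)) (Ici 0) (t * c) :=
      (hdiff _ htc).hasDerivWithinAt
    have hmul : HasDerivWithinAt (fun u : ℝ => u * c) c (Ici 0) t :=
      (hasDerivAt_mul_const c).hasDerivWithinAt
    have hmaps : MapsTo (fun u : ℝ => u * c) (Ici (0:ℝ)) (Ici 0) :=
      fun u hu' => mul_nonneg hu' hc.le
    have hcomp : HasDerivWithinAt (fun u => iteratedDerivWithin n f (Ici 0) (u * c))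
        (c • derivWithin (iteratedDerivWithin n f (Ici 0)) (Ici 0) (t * c)) (Ici 0) t :=
      by have := hg.scomp t hmul hmaps; exact this
    have hsm : HasDerivWithinAt (fun u => c ^ n • iteratedDerivWithin n f (Ici 0) (u * c))
        (c ^ n • c • derivWithin (iteratedDerivWithin n f (Ici 0)) (Ici 0) (t * c)) (Ici 0) t :=
      hcomp.const_smul (c ^ n)
    have hEq : Set.EqOn (iteratedDerivWithin n (fun u => f (u * c)) (Ici 0))
        (fun u => c ^ n • iteratedDerivWithin n f (Ici 0) (u * c)) (Ici 0) :=
      fun u hu' => IH u hu'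
    rw [iteratedDerivWithin_succ, derivWithin_congr hEq (hEq ht),
      hsm.derivWithin (hu t ht), iteratedDerivWithin_succ, smul_smul, pow_succ]

lemma aux_mono (n : ℕ) (w : W) :
    iteratedDerivWithin n (fun t : ℝ => t ^ n • w) (Ici 0) 0 = (n.factorial : ℝ) • w := by
  induction n generalizing w with
  | zero => simp
  | succ n IH =>
    have hu : UniqueDiffOn ℝ (Ici (0:ℝ)) := uniqueDiffOn_Ici 0
    have h0 : (0:ℝ) ∈ Ici (0:ℝ) := self_mem_Ici
    rw [iteratedDerivWithin_succ']
    have hEq : Set.EqOn (derivWithin (fun t : ℝ => t ^ (n+1) • w) (Ici 0))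
        (fun t : ℝ => t ^ n • ((((n:ℝ)+1)) • w)) (Ici 0) := by
      intro y hy
      have hd : HasDerivAt (fun t : ℝ => t ^ (n+1) • w) ((((n:ℝ)+1) * y ^ n) • w) y := by
        have := (hasDerivAt_pow (n+1) y).smul_const w
        simpa using this
      rw [(hd.hasDerivWithinAt).derivWithin (hu y hy)]
      simp only [smul_smul]
      congr 1
      ring
    rw [iteratedDerivWithin_congr hEq h0, IH, smul_smul]
    congr 1
    push_cast [Nat.factorial_succ]
    ring

end aux

/-- For `k ∈ ℤ≥0` and `φ` smooth satisfying `(C_k)`, the quantity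
`c(λ) = (1/(k! log λ)) • (d^k/dt^k)|_{t=0} φ(λ, t)` is independent of `λ ∈ ℝ>0 \ {1}`
and equals the constant `c` in the decomposition
`φ(λ,t) = λ^{-k}ψ(λt) − ψ(t) + t^k log(λ) c`. -/
theorem stmt10 {V : Type*} [NormedAddCommGroup V] [NormedSpace ℂ V]
    [FiniteDimensional ℂ V] (k : ℕ) (φ : ℝ → ℝ → V)
    (hsmooth : ContDiffOn ℝ (⊤ : ℕ∞) (fun p : ℝ × ℝ => φ p.1 p.2) (Ioi 0 ×ˢ Ici 0))
    (hcoc : ∀ l₁ > (0 : ℝ), ∀ l₂ > (0 : ℝ), ∀ t ≥ (0 : ℝ),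
      φ (l₁ * l₂) t = ((l₂ : ℂ) ^ (-(k : ℂ))) • φ l₁ (t * l₂) + φ l₂ t)
    (cfun : ℝ → V)
    (hc : ∀ l : ℝ, cfun l
      = (((k.factorial : ℂ) * (Real.log l : ℂ))⁻¹)
          • iteratedDerivWithin k (φ l) (Ici 0) 0) :
    (∀ l > (0 : ℝ), l ≠ 1 → ∀ m > (0 : ℝ), m ≠ 1 → cfun l = cfun m) ∧
    (∀ (ψ : ℝ → V) (c : V), ContDiffOn ℝ (⊤ : ℕ∞) ψ (Ici 0) →
      (∀ l > (0 : ℝ), ∀ t ≥ (0 : ℝ),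
        φ l t = ((l : ℂ) ^ (-(k : ℂ))) • ψ (l * t) - ψ t
          + (((t : ℂ) ^ k) * (Real.log l : ℂ)) • c) →
      ∀ l > (0 : ℝ), l ≠ 1 → cfun l = c) := by
  have hu : UniqueDiffOn ℝ (Ici (0:ℝ)) := uniqueDiffOn_Ici 0
  have h0 : (0:ℝ) ∈ Ici (0:ℝ) := self_mem_Ici
  set T : ℝ → V := fun l => iteratedDerivWithin k (φ l) (Ici 0) 0 with hTdef
  -- scalar cancellation
  have hscal : ∀ c : ℝ, 0 < c → ∀ v : V, ((c:ℂ) ^ (-(k:ℂ))) • ((c ^ k : ℝ) • v) = v := by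
    intro c hcpos v
    rw [← Complex.coe_smul, smul_smul, Complex.ofReal_pow, Complex.cpow_neg, Complex.cpow_natCast,
      inv_mul_cancel₀ (pow_ne_zero _ (Complex.ofReal_ne_zero.mpr hcpos.ne')), one_smul]
  -- slices are smooth
  have hφl : ∀ l : ℝ, 0 < l → ContDiffOn ℝ (⊤ : ℕ∞) (φ l) (Ici 0) := by
    intro l hl
    have h1 : ContDiffOn ℝ (⊤ : ℕ∞) (fun u : ℝ => ((l:ℝ), u)) (Ici 0) :=
      (contDiff_const.prodMk contDiff_id).contDiffOn
    exact hsmooth.comp h1 (fun u hu' => ⟨hl, hu'⟩)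
  have hφlc : ∀ l : ℝ, 0 < l → ∀ c : ℝ, 0 < c →
      ContDiffOn ℝ (⊤ : ℕ∞) (fun u : ℝ => φ l (u * c)) (Ici 0) := by
    intro l hl c hcpos
    have h1 : ContDiffOn ℝ (⊤ : ℕ∞) (fun u : ℝ => u * c) (Ici 0) :=
      (contDiff_id.mul contDiff_const).contDiffOn
    exact (hφl l hl).comp h1 (fun u hu' => mul_nonneg hu' hcpos.le)
  -- additivity of T
  have hTadd : ∀ l₁ : ℝ, 0 < l₁ → ∀ l₂ : ℝ, 0 < l₂ → T (l₁ * l₂) = T l₁ + T l₂ := by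
    intro l₁ h1 l₂ h2
    have hEq : Set.EqOn (φ (l₁ * l₂))
        ((((l₂:ℂ) ^ (-(k:ℂ))) • (fun t => φ l₁ (t * l₂))) + φ l₂) (Ici 0) := by
      intro t ht
      simpa using hcoc l₁ h1 l₂ h2 t ht
    have hA : ContDiffOn ℝ k (((l₂:ℂ) ^ (-(k:ℂ))) • (fun t => φ l₁ (t * l₂))) (Ici 0) :=
      ((hφlc l₁ h1 l₂ h2).of_le (by exact_mod_cast le_top)).const_smul _
    have hB : ContDiffOn ℝ k (φ l₂) (Ici 0) := (hφl l₂ h2).of_le (by exact_mod_cast le_top)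
    calc T (l₁ * l₂)
        = iteratedDerivWithin k
            ((((l₂:ℂ) ^ (-(k:ℂ))) • (fun t => φ l₁ (t * l₂))) + φ l₂) (Ici 0) 0 :=
          iteratedDerivWithin_congr hEq h0
      _ = iteratedDerivWithin k (((l₂:ℂ) ^ (-(k:ℂ))) • (fun t => φ l₁ (t * l₂))) (Ici 0) 0
            + T l₂ := iteratedDerivWithin_add h0 hu (hA 0 h0) (hB 0 h0)
      _ = ((l₂:ℂ) ^ (-(k:ℂ))) • iteratedDerivWithin k (fun t => φ l₁ (t * l₂)) (Ici 0) 0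
            + T l₂ := by
          rw [iteratedDerivWithin_const_smul h0 hu ((l₂:ℂ) ^ (-(k:ℂ)))
            (((hφlc l₁ h1 l₂ h2).of_le (by exact_mod_cast le_top)) 0 h0)]
      _ = ((l₂:ℂ) ^ (-(k:ℂ))) • ((l₂ ^ k : ℝ) • iteratedDerivWithin k (φ l₁) (Ici 0) (0 * l₂))
            + T l₂ := by rw [aux_scale (φ l₁) (hφl l₁ h1) l₂ h2 k 0 h0]
      _ = T l₁ + T l₂ := by rw [zero_mul, hscal l₂ h2]
  -- continuity of T on Ioi 0
  have hslice := aux_slice (fun p : ℝ × ℝ => φ p.1 p.2) hsmooth k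
  have hTcont : ContinuousOn T (Ioi 0) := by
    have hsprod : UniqueDiffOn ℝ ((Ioi (0:ℝ)) ×ˢ (Ici (0:ℝ))) :=
      (uniqueDiffOn_Ioi 0).prod (uniqueDiffOn_Ici 0)
    have h1 : ContinuousOn (iteratedFDerivWithin ℝ k (fun p : ℝ × ℝ => φ p.1 p.2)
        ((Ioi (0:ℝ)) ×ˢ (Ici (0:ℝ)))) ((Ioi (0:ℝ)) ×ˢ (Ici (0:ℝ))) :=
      hsmooth.continuousOn_iteratedFDerivWithin (by exact_mod_cast le_top) hsprod
    have h2 : ContinuousOn (fun l : ℝ => ((l:ℝ), (0:ℝ))) (Ioi 0) :=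
      (continuous_id.prodMk continuous_const).continuousOn
    have h3 : ContinuousOn (fun l : ℝ => iteratedFDerivWithin ℝ k (fun p : ℝ × ℝ => φ p.1 p.2)
        ((Ioi (0:ℝ)) ×ˢ (Ici (0:ℝ))) (l, 0)) (Ioi 0) :=
      h1.comp h2 (fun l hl => ⟨hl, h0⟩)
    have h4 : ContinuousOn (fun l : ℝ =>
        (ContinuousMultilinearMap.apply ℝ (fun _ : Fin k => ℝ × ℝ) V (fun _ => ((0:ℝ),(1:ℝ))))
          (iteratedFDerivWithin ℝ k (fun p : ℝ × ℝ => φ p.1 p.2)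
            ((Ioi (0:ℝ)) ×ˢ (Ici (0:ℝ))) (l, 0))) (Ioi 0) :=
      (ContinuousMultilinearMap.apply ℝ (fun _ : Fin k => ℝ × ℝ) V
        (fun _ => ((0:ℝ),(1:ℝ)))).continuous.comp_continuousOn h3
    exact h4.congr (fun l hl => hslice l hl 0 h0)
  -- T is a multiple of log
  have hTlin : ∀ l : ℝ, 0 < l → T l = Real.log l • T (Real.exp 1) := by
    intro l hl
    have hSadd : ∀ x y : ℝ, T (Real.exp (x + y)) = T (Real.exp x) + T (Real.exp y) := by
      intro x y
      rw [Real.exp_add]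
      exact hTadd _ (Real.exp_pos x) _ (Real.exp_pos y)
    have hScont : Continuous (fun x : ℝ => T (Real.exp x)) := by
      rw [continuous_iff_continuousAt]
      intro x
      exact (hTcont.continuousAt (Ioi_mem_nhds (Real.exp_pos x))).comp
        Real.continuous_exp.continuousAt
    let L := AddMonoidHom.toRealLinearMap
      (AddMonoidHom.mk' (fun x : ℝ => T (Real.exp x)) hSadd) hScont
    have hL : ∀ x : ℝ, T (Real.exp x) = L x := fun x => rfl
    have key : T (Real.exp (Real.log l)) = Real.log l • T (Real.exp 1) := by
      rw [hL, hL, ← map_smul, smul_eq_mul, mul_one]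
    rwa [Real.exp_log hl] at key
  have hlog : ∀ l : ℝ, 0 < l → l ≠ 1 → ((Real.log l : ℂ)) ≠ 0 :=
    fun l hl h1 => Complex.ofReal_ne_zero.mpr (Real.log_ne_zero_of_pos_of_ne_one hl h1)
  have hcval : ∀ l : ℝ, 0 < l → l ≠ 1 → cfun l = ((k.factorial : ℂ))⁻¹ • T (Real.exp 1) := by
    intro l hl h1
    rw [hc l]
    have hTl : iteratedDerivWithin k (φ l) (Ici 0) 0 = Real.log l • T (Real.exp 1) := hTlin l hl
    rw [hTl, ← Complex.coe_smul, smul_smul, mul_inv, mul_assoc,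
      inv_mul_cancel₀ (hlog l hl h1), mul_one]
  constructor
  · intro l hl h1 m hm hm1
    rw [hcval l hl h1, hcval m hm hm1]
  · intro ψ c hψ hdec l hl h1
    have hψl : ContDiffOn ℝ (⊤ : ℕ∞) (fun t : ℝ => ψ (t * l)) (Ici 0) := by
      have hmulc : ContDiffOn ℝ (⊤ : ℕ∞) (fun u : ℝ => u * l) (Ici 0) :=
        (contDiff_id.mul contDiff_const).contDiffOn
      exact hψ.comp hmulc (fun u hu' => mul_nonneg hu' hl.le)
    have hf₁ : ContDiffOn ℝ k (((l:ℂ) ^ (-(k:ℂ))) • (fun t : ℝ => ψ (t * l))) (Ici 0) :=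
      (hψl.of_le (by exact_mod_cast le_top)).const_smul _
    have hf₂ : ContDiffOn ℝ k ψ (Ici 0) := hψ.of_le (by exact_mod_cast le_top)
    have hf₃ : ContDiffOn ℝ k (fun t : ℝ => t ^ k • ((Real.log l : ℂ) • c)) (Ici 0) :=
      ((contDiff_id.pow k).smul contDiff_const).contDiffOn
    have hEq : Set.EqOn (φ l)
        (((((l:ℂ) ^ (-(k:ℂ))) • (fun t : ℝ => ψ (t * l))) - ψ)
          + fun t : ℝ => t ^ k • ((Real.log l : ℂ) • c)) (Ici 0) := by
      intro t ht
      simp only [Pi.add_apply, Pi.sub_apply, Pi.smul_apply]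
      rw [hdec l hl t ht, mul_comm t l, mul_smul, ← Complex.ofReal_pow, Complex.coe_smul]
    have key : iteratedDerivWithin k (φ l) (Ici 0) 0
        = (k.factorial : ℝ) • ((Real.log l : ℂ) • c) := by
      calc iteratedDerivWithin k (φ l) (Ici 0) 0
          = iteratedDerivWithin k
            (((((l:ℂ) ^ (-(k:ℂ))) • (fun t : ℝ => ψ (t * l))) - ψ)
              + fun t : ℝ => t ^ k • ((Real.log l : ℂ) • c)) (Ici 0) 0 :=
            iteratedDerivWithin_congr hEq h0
        _ = iteratedDerivWithin k
              ((((l:ℂ) ^ (-(k:ℂ))) • (fun t : ℝ => ψ (t * l))) - ψ) (Ici 0) 0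
            + iteratedDerivWithin k (fun t : ℝ => t ^ k • ((Real.log l : ℂ) • c)) (Ici 0) 0 :=
            iteratedDerivWithin_add h0 hu ((hf₁.sub hf₂) 0 h0) (hf₃ 0 h0)
        _ = iteratedDerivWithin k (((l:ℂ) ^ (-(k:ℂ))) • (fun t : ℝ => ψ (t * l))) (Ici 0) 0
            - iteratedDerivWithin k ψ (Ici 0) 0
            + iteratedDerivWithin k (fun t : ℝ => t ^ k • ((Real.log l : ℂ) • c)) (Ici 0) 0 := by
            rw [iteratedDerivWithin_sub h0 hu (hf₁ 0 h0) (hf₂ 0 h0)]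
        _ = ((l:ℂ) ^ (-(k:ℂ))) • iteratedDerivWithin k (fun t : ℝ => ψ (t * l)) (Ici 0) 0
            - iteratedDerivWithin k ψ (Ici 0) 0
            + iteratedDerivWithin k (fun t : ℝ => t ^ k • ((Real.log l : ℂ) • c)) (Ici 0) 0 := by
            rw [iteratedDerivWithin_const_smul h0 hu ((l:ℂ) ^ (-(k:ℂ))) ((hψl.of_le (by exact_mod_cast le_top)) 0 h0)]
        _ = ((l:ℂ) ^ (-(k:ℂ))) • ((l ^ k : ℝ) • iteratedDerivWithin k ψ (Ici 0) (0 * l))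
            - iteratedDerivWithin k ψ (Ici 0) 0
            + iteratedDerivWithin k (fun t : ℝ => t ^ k • ((Real.log l : ℂ) • c)) (Ici 0) 0 := by
            rw [aux_scale ψ hψ l hl k 0 h0]
        _ = (k.factorial : ℝ) • ((Real.log l : ℂ) • c) := by
            rw [zero_mul, hscal l hl, sub_self, zero_add, aux_mono]
    rw [hc l, key, ← Complex.coe_smul, smul_smul, smul_smul, Complex.ofReal_natCast, mul_assoc,
      inv_mul_cancel₀ (mul_ne_zero (Nat.cast_ne_zero.mpr k.factorial_ne_zero) (hlog l hl h1)),
      one_smul]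
end

section
/- Let k ∈ ℂ with Re(k) < 0 and φ continuous satisfying (C_k). If ψ(t) := −∑_{j=0}^∞ φ(1/2, t/2^j) 2^{jk}, then for all λ > 0 and t ≥ 0: φ(λ, t) = λ^{-k} ψ(λt) − ψ(t). In particular, the solution ψ of this functional equation among continuous functions on ℝ≥0 is unique. -/
open Set

/-- For `Re k < 0` and `φ` continuous satisfying `(C_k)`, with
`ψ(t) = −∑_j 2^{jk} • φ(1/2, t/2^j)`, one has `φ(λ, t) = λ^{-k} • ψ(λ t) − ψ(t)` for all
`λ > 0`, `t ≥ 0`; moreover `ψ` is the unique continuous solution of this equation. -/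
theorem stmt12 {V : Type*} [NormedAddCommGroup V] [NormedSpace ℂ V]
    [FiniteDimensional ℂ V] (k : ℂ) (hk : k.re < 0) (φ : ℝ → ℝ → V)
    (hcont : ContinuousOn (fun p : ℝ × ℝ => φ p.1 p.2) (Ioi 0 ×ˢ Ici 0))
    (hcoc : ∀ l₁ > (0 : ℝ), ∀ l₂ > (0 : ℝ), ∀ t ≥ (0 : ℝ),
      φ (l₁ * l₂) t = ((l₂ : ℂ) ^ (-k)) • φ l₁ (t * l₂) + φ l₂ t)
    (ψ : ℝ → V)
    (hψ : ∀ t : ℝ, ψ t = -∑' j : ℕ, ((2 : ℂ) ^ ((j : ℂ) * k)) • φ (1 / 2) (t / 2 ^ j)) :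
    (∀ l > (0 : ℝ), ∀ t ≥ (0 : ℝ),
      φ l t = ((l : ℂ) ^ (-k)) • ψ (l * t) - ψ t) ∧
    (∀ ψ' : ℝ → V, ContinuousOn ψ' (Ici 0) →
      (∀ l > (0 : ℝ), ∀ t ≥ (0 : ℝ),
        φ l t = ((l : ℂ) ^ (-k)) • ψ' (l * t) - ψ' t) →
      ∀ t ≥ (0 : ℝ), ψ' t = ψ t) := by
  set r : ℝ := (2:ℝ) ^ k.re with hr
  have hr0 : 0 < r := Real.rpow_pos_of_pos two_pos _
  have hr1 : r < 1 := Real.rpow_lt_one_of_one_lt_of_neg one_lt_two hk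
  -- norm of 2^(j k)
  have hnorm : ∀ j : ℕ, ‖(2:ℂ) ^ ((j:ℂ) * k)‖ = r ^ j := by
    intro j
    rw [show ((2:ℂ)) = ((2:ℝ):ℂ) by norm_num, Complex.norm_cpow_eq_rpow_re_of_pos two_pos,
      show (((j:ℂ)*k).re) = (j:ℝ) * k.re by simp,
      hr, ← Real.rpow_natCast ((2:ℝ) ^ k.re) j, ← Real.rpow_mul (by norm_num), mul_comm]
  -- continuity of φ l on Ici 0 for l > 0
  have hφcont : ∀ l > (0:ℝ), ContinuousOn (fun s => φ l s) (Ici 0) := by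
    intro l hl
    have : ContinuousOn (fun s : ℝ => ((l, s) : ℝ × ℝ)) (Ici 0) :=
      (continuous_const.prodMk continuous_id).continuousOn
    exact hcont.comp this (fun s hs => ⟨hl, hs⟩)
  -- boundedness on compacts
  have hφbdd : ∀ l > (0:ℝ), ∀ t : ℝ, ∃ C, 0 < C ∧ ∀ s ∈ Icc (0:ℝ) t, ‖φ l s‖ ≤ C := by
    intro l hl t
    obtain ⟨C, hC⟩ := (isCompact_Icc (a := (0:ℝ)) (b := t)).exists_bound_of_continuousOn
      ((hφcont l hl).mono (fun s hs => hs.1))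
    exact ⟨max C 1, lt_of_lt_of_le one_pos (le_max_right _ _),
      fun s hs => (hC s hs).trans (le_max_left _ _)⟩
  -- summability
  have hsum : ∀ s ≥ (0:ℝ), Summable (fun j : ℕ => ((2:ℂ) ^ ((j:ℂ) * k)) • φ (1/2) (s / 2 ^ j)) := by
    intro s hs
    obtain ⟨C, hC0, hC⟩ := hφbdd (1/2) (by norm_num) s
    apply Summable.of_norm
    apply Summable.of_nonneg_of_le (fun j => norm_nonneg _) (fun j => ?_)
      ((summable_geometric_of_lt_one hr0.le hr1).mul_left C)
    rw [norm_smul, hnorm, mul_comm]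
    gcongr
    apply hC
    have h2j : (1:ℝ) ≤ 2 ^ j := one_le_pow₀ one_le_two
    exact ⟨div_nonneg hs (by positivity), div_le_self hs h2j⟩
  -- bound on ψ on [0,t]
  have hψbdd : ∀ t : ℝ, ∃ B, 0 < B ∧ ∀ s ∈ Icc (0:ℝ) t, ‖ψ s‖ ≤ B := by
    intro t
    obtain ⟨C, hC0, hC⟩ := hφbdd (1/2) (by norm_num) t
    refine ⟨C * (1 - r)⁻¹, mul_pos hC0 (inv_pos.mpr (by linarith)), fun s hs => ?_⟩
    rw [hψ s, norm_neg]
    have hsub : ∀ j : ℕ, s / 2 ^ j ∈ Icc (0:ℝ) t := by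
      intro j
      have hs0 := hs.1
      have h2j : (1:ℝ) ≤ 2 ^ j := one_le_pow₀ one_le_two
      exact ⟨div_nonneg hs0 (by positivity), (div_le_self hs0 h2j).trans hs.2⟩
    have h1 : ∀ j : ℕ, ‖((2:ℂ) ^ ((j:ℂ) * k)) • φ (1/2) (s / 2 ^ j)‖ ≤ C * r ^ j := by
      intro j
      rw [norm_smul, hnorm, mul_comm]
      gcongr
      exact hC _ (hsub j)
    calc ‖∑' j : ℕ, ((2:ℂ) ^ ((j:ℂ) * k)) • φ (1/2) (s / 2 ^ j)‖
        ≤ ∑' j : ℕ, C * r ^ j := by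
          apply tsum_of_norm_bounded _ h1
          exact ((summable_geometric_of_lt_one hr0.le hr1).mul_left C).hasSum
      _ = C * (1 - r)⁻¹ := by
          rw [tsum_mul_left, tsum_geometric_of_lt_one hr0.le hr1]
  have h2ne : (2:ℂ) ≠ 0 := two_ne_zero
  have hhalfpow : (((1/2 : ℝ):ℂ)) ^ (-k) = (2:ℂ) ^ k := by
    push_cast
    rw [show ((1:ℂ)/2) = (2:ℂ)⁻¹ by norm_num]
    have harg : Complex.arg 2 ≠ Real.pi := by
      rw [show (2:ℂ) = ((2:ℝ):ℂ) by norm_num,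
        Complex.arg_ofReal_of_nonneg (by norm_num : (0:ℝ) ≤ 2)]
      exact Real.pi_ne_zero.symm
    rw [Complex.inv_cpow _ _ harg, Complex.cpow_neg, inv_inv]
  have hterm : ∀ (t:ℝ) (j:ℕ), (2:ℂ)^k • (((2:ℂ) ^ ((j:ℂ) * k)) • φ (1/2) ((t/2) / 2 ^ j))
      = ((2:ℂ) ^ (((j+1:ℕ):ℂ) * k)) • φ (1/2) (t / 2 ^ (j+1)) := by
    intro t j
    rw [smul_smul, ← Complex.cpow_add _ _ h2ne]
    congr 2
    · push_cast; ring
    · rw [pow_succ]; ring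
  have hhalf : ∀ t ≥ (0:ℝ), φ (1/2) t = (2:ℂ)^k • ψ (t/2) - ψ t := by
    intro t ht
    have hsum1 := hsum (t/2) (by linarith)
    have hsum2 := hsum t ht
    have e1 : (2:ℂ)^k • ψ (t/2)
        = -∑' j:ℕ, ((2:ℂ) ^ (((j+1:ℕ):ℂ) * k)) • φ (1/2) (t / 2 ^ (j+1)) := by
      rw [hψ (t/2), smul_neg, ← (hsum1.hasSum.const_smul ((2:ℂ)^k)).tsum_eq]
      exact congrArg Neg.neg (tsum_congr (fun j => hterm t j))
    have e2 : ψ t = -(((2:ℂ) ^ (((0:ℕ):ℂ) * k)) • φ (1/2) (t / 2 ^ (0:ℕ))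
        + ∑' j:ℕ, ((2:ℂ) ^ (((j+1:ℕ):ℂ) * k)) • φ (1/2) (t / 2 ^ (j+1))) := by
      rw [hψ t, hsum2.tsum_eq_zero_add]
    have e3 : ((2:ℂ) ^ (((0:ℕ):ℂ) * k)) • φ (1/2) (t / 2 ^ (0:ℕ)) = φ (1/2) t := by
      norm_num
    rw [e1, e2, ← e3]
    abel
  have h2k : ‖(2:ℂ)^k‖ = r := by simpa using hnorm 1
  have main : ∀ l > (0:ℝ), ∀ t ≥ (0:ℝ), φ l t = ((l:ℂ) ^ (-k)) • ψ (l * t) - ψ t := by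
    intro l hl t ht
    set G : ℝ → V := fun s => φ l s - (((l:ℂ) ^ (-k)) • ψ (l * s) - ψ s) with hGdef
    have hstep : ∀ s ≥ (0:ℝ), G s = (2:ℂ)^k • G (s/2) := by
      intro s hs
      have h1 := hcoc l hl (1/2) (by norm_num) s hs
      have h2 := hcoc (1/2) (by norm_num) l hl s hs
      rw [hhalfpow, show l * (1/2) = (1/2) * l by ring, show s * (1/2) = s/2 by ring] at h1
      have key : (2:ℂ)^k • φ l (s/2) + φ (1/2) s
          = ((l:ℂ)^(-k)) • φ (1/2) (s*l) + φ l s := h1.symm.trans h2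
      rw [hhalf s hs, hhalf (s*l) (mul_nonneg hs hl.le)] at key
      simp only [hGdef]
      rw [show l * (s/2) = s*l/2 by ring, show l * s = s*l by ring]
      -- goal in terms of φ l s, φ l (s/2), ψ at s, s/2, s*l, s*l/2
      have key2 : φ l s = (2:ℂ)^k • φ l (s/2) + ((2:ℂ)^k • ψ (s/2) - ψ s)
          - ((l:ℂ)^(-k)) • ((2:ℂ)^k • ψ (s*l/2) - ψ (s*l)) := by
        rw [eq_sub_iff_add_eq, key]; abel
      rw [key2]
      rw [smul_sub, smul_sub, smul_sub, smul_smul, smul_smul, mul_comm ((2:ℂ)^k) ((l:ℂ)^(-k))]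
      module
    have hiter : ∀ n : ℕ, G t = ((2:ℂ)^k)^n • G (t / 2^n) := by
      intro n
      induction n with
      | zero => simp
      | succ n ih =>
        rw [ih, hstep (t / 2^n) (div_nonneg ht (by positivity)), smul_smul, ← pow_succ,
          show t / 2^n / 2 = t / 2^(n+1) by rw [pow_succ]; ring]
    obtain ⟨C1, hC10, hC1⟩ := hφbdd l hl t
    obtain ⟨B1, hB10, hB1⟩ := hψbdd (l*t)
    obtain ⟨B2, hB20, hB2⟩ := hψbdd t
    set M : ℝ := C1 + (‖(l:ℂ)^(-k)‖ * B1 + B2) with hM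
    have hGbdd : ∀ n : ℕ, ‖G (t / 2^n)‖ ≤ M := by
      intro n
      have h2n : (1:ℝ) ≤ 2^n := one_le_pow₀ one_le_two
      have hs1 : t / 2^n ∈ Icc (0:ℝ) t :=
        ⟨div_nonneg ht (by positivity), div_le_self ht h2n⟩
      have hs2 : l * (t / 2^n) ∈ Icc (0:ℝ) (l*t) := by
        constructor
        · exact mul_nonneg hl.le hs1.1
        · exact mul_le_mul_of_nonneg_left hs1.2 hl.le
      simp only [hGdef]
      calc ‖φ l (t / 2^n) - (((l:ℂ)^(-k)) • ψ (l * (t / 2^n)) - ψ (t / 2^n))‖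
          ≤ ‖φ l (t / 2^n)‖ + ‖((l:ℂ)^(-k)) • ψ (l * (t / 2^n)) - ψ (t / 2^n)‖ :=
            norm_sub_le _ _
        _ ≤ ‖φ l (t / 2^n)‖ + (‖((l:ℂ)^(-k)) • ψ (l * (t / 2^n))‖ + ‖ψ (t / 2^n)‖) := by
            gcongr; exact norm_sub_le _ _
        _ ≤ C1 + (‖(l:ℂ)^(-k)‖ * B1 + B2) := by
            gcongr
            · exact hC1 _ hs1
            · rw [norm_smul]; gcongr; exact hB1 _ hs2
            · exact hB2 _ hs1
    have hGle : ∀ n : ℕ, ‖G t‖ ≤ r^n * M := by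
      intro n
      rw [hiter n, norm_smul, norm_pow, h2k]
      exact mul_le_mul_of_nonneg_left (hGbdd n) (pow_nonneg hr0.le n)
    have htend : Filter.Tendsto (fun n : ℕ => r^n * M) Filter.atTop (nhds 0) := by
      simpa using (tendsto_pow_atTop_nhds_zero_of_lt_one hr0.le hr1).mul_const M
    have hG0 : G t = 0 := by
      have : ‖G t‖ ≤ 0 := ge_of_tendsto htend (Filter.Eventually.of_forall hGle)
      simpa using le_antisymm this (norm_nonneg _)
    have := sub_eq_zero.mp hG0
    exact this
  refine ⟨main, ?_⟩
  intro ψ' hψ'cont heq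
  set δ : ℝ → V := fun s => ψ' s - ψ s with hδdef
  have hδ : ∀ l > (0:ℝ), ∀ s ≥ (0:ℝ), δ s = ((l:ℂ)^(-k)) • δ (l*s) := by
    intro l hl s hs
    have h12 := (heq l hl s hs).symm.trans (main l hl s hs)
    simp only [hδdef]
    rw [smul_sub]
    exact (sub_eq_sub_iff_sub_eq_sub.mp h12).symm
  have hδ0 : δ 0 = 0 := by
    have h := hδ 2 (by norm_num) 0 (le_refl 0)
    rw [mul_zero] at h
    have hne : (((2:ℝ):ℂ))^(-k) ≠ 1 := by
      intro hcontra
      have hn := congrArg norm hcontra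
      rw [Complex.norm_cpow_eq_rpow_re_of_pos two_pos, norm_one] at hn
      have : (1:ℝ) < (2:ℝ) ^ (-k).re := by
        apply Real.one_lt_rpow_iff_of_pos two_pos |>.mpr
        left
        exact ⟨one_lt_two, by simpa using neg_pos.mpr hk⟩
      linarith [hn]
    have hz : (1 - ((2:ℝ):ℂ)^(-k)) • δ 0 = 0 := by
      rw [sub_smul, one_smul, ← h, sub_self]
    rcases smul_eq_zero.mp hz with h' | h'
    · exact absurd (sub_eq_zero.mp h').symm hne
    · exact h'
  have hδ1 : δ 1 = 0 := by
    obtain ⟨B1, hB10, hB1⟩ := hψbdd 1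
    obtain ⟨B2, hB2⟩ := (isCompact_Icc (a := (0:ℝ)) (b := 1)).exists_bound_of_continuousOn
      (hψ'cont.mono (fun s hs => hs.1))
    have hδbdd : ∀ s ∈ Icc (0:ℝ) 1, ‖δ s‖ ≤ B2 + B1 := by
      intro s hs
      simp only [hδdef]
      exact (norm_sub_le _ _).trans (add_le_add (hB2 s hs) (hB1 s hs))
    have hbound : ∀ n : ℕ, ‖δ 1‖ ≤ r^n * (B2 + B1) := by
      intro n
      have hlpos : (0:ℝ) < (1/2:ℝ)^n := by positivity
      have h := hδ ((1/2)^n) hlpos 1 zero_le_one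
      rw [mul_one] at h
      rw [h, norm_smul]
      have hnn : ‖((((1/2:ℝ)^n :ℝ)):ℂ)^(-k)‖ = r^n := by
        rw [Complex.norm_cpow_eq_rpow_re_of_pos hlpos,
          ← Real.rpow_natCast ((1/2:ℝ)) n, ← Real.rpow_mul (by norm_num), Complex.neg_re,
          show (1/2:ℝ) = 2⁻¹ by norm_num, Real.inv_rpow (by norm_num),
          ← Real.rpow_neg (by norm_num), show -((n:ℝ) * -k.re) = k.re * (n:ℝ) by ring,
          Real.rpow_mul (by norm_num), hr, Real.rpow_natCast]
      rw [hnn]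
      apply mul_le_mul_of_nonneg_left _ (pow_nonneg hr0.le n)
      exact hδbdd _ ⟨hlpos.le, pow_le_one₀ (by norm_num) (by norm_num)⟩
    have htend : Filter.Tendsto (fun n : ℕ => r^n * (B2 + B1)) Filter.atTop (nhds 0) := by
      simpa using (tendsto_pow_atTop_nhds_zero_of_lt_one hr0.le hr1).mul_const (B2 + B1)
    have : ‖δ 1‖ ≤ 0 := ge_of_tendsto htend (Filter.Eventually.of_forall hbound)
    simpa using le_antisymm this (norm_nonneg _)
  have hδpos : ∀ s > (0:ℝ), δ s = 0 := by
    intro s hs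
    have h := hδ s hs 1 zero_le_one
    rw [mul_one, hδ1] at h
    have hne : ((s:ℂ))^(-k) ≠ 0 := by
      rw [Ne, Complex.cpow_eq_zero_iff]
      push_neg
      intro hs0
      exact absurd hs0 (by exact_mod_cast hs.ne')
    rcases smul_eq_zero.mp h.symm with h' | h'
    · exact absurd h' hne
    · exact h'
  intro t ht
  have hd : δ t = 0 := by
    rcases eq_or_lt_of_le ht with h | h
    · rw [← h]; exact hδ0
    · exact hδpos t h
  have := sub_eq_zero.mp hd
  exact this
end

section
/- Let U ⊆ ℂ be open, φ : U × ℝ>0 × ℝ≥0 → V continuous and holomorphic in z, with φ(z,·,·) satisfying (C_z) for each z ∈ U. For z ≠ 0, let v(z) ∈ V be the unique vector with φ(z, λ, 0) = (λ^{-z} − 1) v(z). Then v is holomorphic on U \ {0} and has at most a simple pole at z = 0 with residue −φ(0, λ, 0)/log(λ) (independent of λ > 0, λ ≠ 1). -/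
open Set Filter Topology

lemma aux_exp_ne_one {w c : ℂ} (hw : w ≠ 0) (hc : c ≠ 0)
    (hn : ‖w‖ * ‖c‖ < 2 * Real.pi) : Complex.exp (-(w * c)) ≠ 1 := by
  intro h
  obtain ⟨n, hn'⟩ := Complex.exp_eq_one_iff.mp h
  have hnorm : ‖w‖ * ‖c‖ = |(n : ℝ)| * (2 * Real.pi) := by
    have := congrArg norm hn'
    simpa [norm_neg, norm_mul, Complex.norm_real, abs_of_nonneg Real.pi_pos.le,
      mul_comm, mul_assoc, mul_left_comm] using this
  rcases eq_or_ne n 0 with h0 | h0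
  · rw [h0] at hn'
    simp only [Int.cast_zero, zero_mul, neg_eq_zero, mul_eq_zero] at hn'
    tauto
  · have h1 : (1 : ℝ) ≤ |(n : ℝ)| := by
      have : (1 : ℤ) ≤ |n| := Int.one_le_abs h0
      calc (1:ℝ) ≤ ((|n| : ℤ) : ℝ) := by exact_mod_cast this
        _ = |(n : ℝ)| := by push_cast; ring
    have : 2 * Real.pi ≤ |(n : ℝ)| * (2 * Real.pi) :=
      le_mul_of_one_le_left (by positivity) h1
    linarith [hnorm ▸ hn]

lemma aux_tendsto_div (c : ℂ) (hc : c ≠ 0) :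
    Tendsto (fun z : ℂ => z / (Complex.exp (-(z * c)) - 1)) (𝓝[≠] 0)
      (𝓝 (-c⁻¹)) := by
  have hf : HasDerivAt (fun z : ℂ => Complex.exp (-(z * c)) - 1) (-c) 0 := by
    have h1 : HasDerivAt (fun z : ℂ => -(z * c)) (-c) 0 := by
      exact ((hasDerivAt_id (0 : ℂ)).mul_const c).neg.congr_deriv (by simp)
    simpa using h1.cexp.sub_const 1
  have hslope := hasDerivAt_iff_tendsto_slope.mp hf
  have h2 : Tendsto
      (fun z : ℂ => (slope (fun z : ℂ => Complex.exp (-(z * c)) - 1) 0 z)⁻¹)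
      (𝓝[≠] 0) (𝓝 (-c)⁻¹) := hslope.inv₀ (neg_ne_zero.mpr hc)
  rw [show -c⁻¹ = (-c)⁻¹ from inv_neg.symm] at *
  refine h2.congr' ?_ |>.mono_left le_rfl
  filter_upwards [self_mem_nhdsWithin] with z hz
  simp [slope_def_field, div_sub_div_same, inv_div]

/-- Let `U ⊆ ℂ` be open, `φ(z, ·, ·)` continuous, holomorphic in `z`,
satisfying `(C_z)` for each `z ∈ U`, and for `z ≠ 0` let `v(z)` be the unique vector with
`φ(z, λ, 0) = (λ^{-z} − 1) • v(z)`. Then `v` is holomorphic on `U \ {0}` and has at most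
a simple pole at `z = 0` with residue `−φ(0, λ, 0)/log(λ)` (independent of `λ ≠ 1`). -/
theorem stmt14 {V : Type*} [NormedAddCommGroup V] [NormedSpace ℂ V]
    [FiniteDimensional ℂ V] (U : Set ℂ) (hU : IsOpen U) (φ : ℂ → ℝ → ℝ → V)
    (hcont : ∀ z ∈ U,
      ContinuousOn (fun p : ℝ × ℝ => φ z p.1 p.2) (Ioi 0 ×ˢ Ici 0))
    (hhol : ∀ l > (0 : ℝ), ∀ t ≥ (0 : ℝ), DifferentiableOn ℂ (fun z => φ z l t) U)
    (hcoc : ∀ z ∈ U, ∀ l₁ > (0 : ℝ), ∀ l₂ > (0 : ℝ), ∀ t ≥ (0 : ℝ),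
      φ z (l₁ * l₂) t = ((l₂ : ℂ) ^ (-z)) • φ z l₁ (t * l₂) + φ z l₂ t)
    (v : ℂ → V)
    (hv : ∀ z ∈ U, z ≠ 0 → ∀ l > (0 : ℝ),
      φ z l 0 = (((l : ℂ) ^ (-z)) - 1) • v z) :
    DifferentiableOn ℂ v (U \ {0}) ∧
    (0 ∈ U → ∀ l > (0 : ℝ), l ≠ 1 →
      Tendsto (fun z : ℂ => z • v z) (𝓝[≠] 0)
        (𝓝 (-(((Real.log l : ℂ))⁻¹ • φ 0 l 0)))) := by
  -- a general rewriting of the power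
  have hpow : ∀ (l : ℝ), 0 < l → ∀ w : ℂ,
      (l : ℂ) ^ (-w) = Complex.exp (-(w * (Real.log l : ℂ))) := by
    intro l hl w
    rw [Complex.cpow_def_of_ne_zero (by exact_mod_cast hl.ne'),
      ← Complex.ofReal_log hl.le]
    ring_nf
  constructor
  · -- differentiability on U \ {0}
    intro z₀ hz₀
    obtain ⟨hz₀U, hz₀ne⟩ := hz₀
    have hz₀ne : z₀ ≠ 0 := hz₀ne
    set s : ℝ := Real.pi / ‖z₀‖ with hs_def
    have hs : 0 < s := div_pos Real.pi_pos (norm_pos_iff.mpr hz₀ne)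
    set l : ℝ := Real.exp s with hl_def
    have hl : 0 < l := Real.exp_pos s
    have hlog : Real.log l = s := Real.log_exp s
    set c : ℂ := (Real.log l : ℂ) with hc_def
    have hc : c ≠ 0 := by
      simp [hc_def, hlog, hs.ne']
    set W : Set ℂ := U ∩ {w | Complex.exp (-(w * c)) ≠ 1} with hW_def
    have hWopen : IsOpen W := by
      apply hU.inter
      have : Continuous fun w : ℂ => Complex.exp (-(w * c)) := by continuity
      exact isOpen_compl_singleton.preimage this
    have hz₀W : z₀ ∈ W := by
      refine ⟨hz₀U, ?_⟩
      apply aux_exp_ne_one hz₀ne hc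
      have hcnorm : ‖c‖ = s := by
        simp [hc_def, hlog, Complex.norm_real, abs_of_nonneg hs.le]
      rw [hcnorm, hs_def, mul_div_cancel₀ _ (norm_pos_iff.mpr hz₀ne).ne']
      linarith [Real.pi_pos]
    -- the local formula for v
    have hformula : ∀ w ∈ W, v w = (Complex.exp (-(w * c)) - 1)⁻¹ • φ w l 0 := by
      intro w hw
      have hwne : w ≠ 0 := by
        intro h
        apply hw.2
        simp [h]
      have hd : Complex.exp (-(w * c)) - 1 ≠ 0 := sub_ne_zero.mpr hw.2
      have := hv w hw.1 hwne l hl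
      rw [hpow l hl w] at this
      rw [this, smul_smul, inv_mul_cancel₀ hd, one_smul]
    have hg : DifferentiableOn ℂ
        (fun w => (Complex.exp (-(w * c)) - 1)⁻¹ • φ w l 0) W := by
      apply DifferentiableOn.smul
      · apply DifferentiableOn.inv
        · apply DifferentiableOn.sub_const
          apply Differentiable.differentiableOn
          apply Complex.differentiable_exp.comp
          exact (differentiable_id.mul_const c).neg
        · exact fun w hw => sub_ne_zero.mpr hw.2
      · exact (hhol l hl 0 le_rfl).mono (inter_subset_left)
    have hda : DifferentiableAt ℂ v z₀ := by
      have hgat : DifferentiableAt ℂ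
          (fun w => (Complex.exp (-(w * c)) - 1)⁻¹ • φ w l 0) z₀ :=
        hg.differentiableAt (hWopen.mem_nhds hz₀W)
      apply hgat.congr_of_eventuallyEq
      filter_upwards [hWopen.mem_nhds hz₀W] with w hw using hformula w hw
    exact hda.differentiableWithinAt
  · -- residue at 0
    intro h0U l hl hl1
    set c : ℂ := (Real.log l : ℂ) with hc_def
    have hc : c ≠ 0 := by
      simp only [hc_def, ne_eq, Complex.ofReal_eq_zero]
      exact Real.log_ne_zero_of_pos_of_ne_one hl hl1
    have hφc : ContinuousAt (fun z => φ z l 0) 0 :=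
      ((hhol l hl 0 le_rfl).differentiableAt (hU.mem_nhds h0U)).continuousAt
    have hlim : Tendsto (fun z : ℂ => (z / (Complex.exp (-(z * c)) - 1)) • φ z l 0)
        (𝓝[≠] 0) (𝓝 ((-c⁻¹) • φ 0 l 0)) :=
      (aux_tendsto_div c hc).smul (hφc.tendsto.mono_left nhdsWithin_le_nhds)
    rw [show -((c : ℂ)⁻¹ • φ 0 l 0) = (-c⁻¹) • φ 0 l 0 by rw [neg_smul]]
    refine hlim.congr' ?_
    have hU0 : ∀ᶠ z : ℂ in 𝓝[≠] 0, z ∈ U :=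
      eventually_nhdsWithin_of_eventually_nhds (hU.eventually_mem h0U)
    have hsmall : ∀ᶠ z : ℂ in 𝓝[≠] 0, ‖z‖ * ‖c‖ < 2 * Real.pi := by
      apply eventually_nhdsWithin_of_eventually_nhds
      have htend : Tendsto (fun z : ℂ => ‖z‖ * ‖c‖) (𝓝 0) (𝓝 0) := by
        simpa using ((continuous_norm.tendsto (0 : ℂ)).mul_const ‖c‖)
      exact htend.eventually_lt_const (by positivity)
    filter_upwards [hU0, hsmall, self_mem_nhdsWithin] with z hzU hzs hzne
    have hzne : z ≠ 0 := hzne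
    have hexp : Complex.exp (-(z * c)) ≠ 1 := aux_exp_ne_one hzne hc hzs
    have hd : Complex.exp (-(z * c)) - 1 ≠ 0 := sub_ne_zero.mpr hexp
    have hφ := hv z hzU hzne l hl
    rw [hpow l hl z, ← hc_def] at hφ
    rw [hφ, smul_smul, div_mul_cancel₀ _ hd]
end
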